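/- arXiv:2210.15175 — 4 statements merged into one kernel-verified Lean document; each statement's English description precedes it below -/
import Mathlib

section
/- There is a universal constant C > 0 such that the following holds. Let X be a finite partially ordered set with |X| ≥ 2, let ℓ : [0,1]×[0,1] → ℝ≥0 be an L-Lipschitz loss function, let n ≥ 1 and ε ∈ (0,1]. Then there exists a randomized algorithm M mapping each dataset D ∈ (X×[0,1])^n to a probability distribution over monotone functions f : X → [0,1], such that M is ε-differentially private and for every dataset D, the expected excess empirical risk E_{f∼M(D)}[L_ℓ(f;D)] − min_{g monotone, g:X→[0,1]} L_ℓ(g;D) is at most C · L · width(X) · log|X| · (1 + log²(εn)) / (εn). -/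
open MeasureTheory

noncomputable section

/-- The (normalized) empirical risk of `f` on dataset `D` with loss `ℓ`. -/
def empRisk {X : Type*} (ℓ : ℝ → ℝ → ℝ) {n : ℕ} (f : X → ℝ) (D : Fin n → X × ℝ) : ℝ :=
  (1 / (n : ℝ)) * ∑ i, ℓ (f (D i).1) (D i).2

/-- A valid dataset: all labels lie in `[0,1]`. -/
def IsDataset {X : Type*} {n : ℕ} (D : Fin n → X × ℝ) : Prop :=
  ∀ i, (D i).2 ∈ Set.Icc (0 : ℝ) 1

/-- Two (valid) datasets are neighboring if they differ in at most one entry. -/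
def NeighborDS {X : Type*} {n : ℕ} (D D' : Fin n → X × ℝ) : Prop :=
  IsDataset D ∧ IsDataset D' ∧ ∃ i, ∀ j, j ≠ i → D j = D' j

/-- A monotone function on the poset `X` taking values in `[0,1]`. -/
def IsMonotone01 {X : Type*} [PartialOrder X] (f : X → ℝ) : Prop :=
  Monotone f ∧ ∀ x, f x ∈ Set.Icc (0 : ℝ) 1

/-- The optimal empirical risk over all monotone `[0,1]`-valued functions. -/
def optRisk {X : Type*} [PartialOrder X] (ℓ : ℝ → ℝ → ℝ) {n : ℕ} (D : Fin n → X × ℝ) : ℝ :=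
  ⨅ g : {g : X → ℝ // IsMonotone01 g}, empRisk ℓ g.1 D

/-- `(ε, δ)`-differential privacy of a mechanism `M` w.r.t. a neighboring relation. -/
def IsDP {I Ω : Type*} [MeasurableSpace Ω] (Neighbor : I → I → Prop)
    (M : I → Measure Ω) (ε δ : ℝ) : Prop :=
  ∀ D D', Neighbor D D' → ∀ S : Set Ω, MeasurableSet S →
    M D S ≤ ENNReal.ofReal (Real.exp ε) * M D' S + ENNReal.ofReal δ

/-- A loss function `ℓ : [0,1] × [0,1] → ℝ≥0` that is `L`-Lipschitz in its first argument. -/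
def IsLipschitzLoss (ℓ : ℝ → ℝ → ℝ) (L : ℝ) : Prop :=
  (∀ y z : ℝ, y ∈ Set.Icc (0:ℝ) 1 → z ∈ Set.Icc (0:ℝ) 1 → 0 ≤ ℓ y z) ∧
  (∀ y y' z : ℝ, y ∈ Set.Icc (0:ℝ) 1 → y' ∈ Set.Icc (0:ℝ) 1 → z ∈ Set.Icc (0:ℝ) 1 →
    |ℓ y z - ℓ y' z| ≤ L * |y - y'|)

/-- An `R`-distance-based loss function: `ℓ(y,y') = g(|y - y'|)` for a non-decreasing
nonnegative `g` with `g 0 = 0` and `g (1/2) ≥ R`. -/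
def IsDistanceBasedLoss (ℓ : ℝ → ℝ → ℝ) (R : ℝ) : Prop :=
  ∃ g : ℝ → ℝ, MonotoneOn g (Set.Icc (0:ℝ) 1) ∧ (∀ t ∈ Set.Icc (0:ℝ) 1, 0 ≤ g t) ∧
    g 0 = 0 ∧ R ≤ g (1 / 2) ∧
    ∀ y y' : ℝ, y ∈ Set.Icc (0:ℝ) 1 → y' ∈ Set.Icc (0:ℝ) 1 → ℓ y y' = g |y - y'|

/-- The width of a poset: the largest size of an antichain. -/
def posetWidth (X : Type*) [PartialOrder X] : ℕ :=
  sSup {k | ∃ A : Finset X, IsAntichain (· ≤ ·) (A : Set X) ∧ A.card = k}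

/-- An isotonic-regression mechanism: on each valid dataset it outputs a probability
distribution supported on monotone `[0,1]`-valued functions. -/
def IsIsoRegAlg {X : Type*} [PartialOrder X] {n : ℕ}
    (M : (Fin n → X × ℝ) → Measure (X → ℝ)) : Prop :=
  ∀ D : Fin n → X × ℝ, IsDataset D →
    IsProbabilityMeasure (M D) ∧ M D {f | IsMonotone01 f} = 1

/-!
The mechanism refines a monotone "grid map" level by level: at level `d` every point carries a
dyadic interval of length `2⁻ᵈ`, and each round splits every interval into its two halves. The
potential of a grid map adds up, over its level sets, the least risk there of a monotone function
respecting the intervals. It equals the optimal risk at level `0`, and some refinement never increases it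
(split a near-optimal monotone function at the midpoints). Each round draws the refinement by the
exponential mechanism with the potential as score. Changing one data point shifts the potentials
of all refinements by a common amount, up to `2L / (2ᵈ n)`, so a round with inverse temperature
`ε₀ 2ᵈ n / (4L)` is `ε₀`-DP, while the expected potential grows by at most
`(1 + log #refinements) · 4L / (ε₀ 2ᵈ n)`. On each level set a refinement is determined by an
antichain, so `log #refinements ≤ 2ᵈ · width · log (|X| + 1)`. With `T ≈ log₂ (ε n)` rounds of
budget `ε / T`, rounding to the final grid costs `L / 2ᵀ ≤ L / (ε n)`, and the `T` rounds cost
`O(L T² width log |X| / (ε n))`.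
-/

open Finset

namespace PrivateIsotonic

section Gibbs

variable {α : Type*} (F : Finset α) (lam : ℝ) (φ : α → ℝ)

/-- The exponential mechanism on `F` with score `-φ`. -/
def gibbs (v : α) : ℝ :=
  Real.exp (-lam * φ v) / ∑ u ∈ F, Real.exp (-lam * φ u)

variable {F}

lemma sum_exp_pos (hF : F.Nonempty) (f : α → ℝ) : 0 < ∑ v ∈ F, Real.exp (f v) :=
  sum_pos (fun _ _ => Real.exp_pos _) hF

lemma gibbs_nonneg (v : α) : 0 ≤ gibbs F lam φ v := by
  unfold gibbs
  exact div_nonneg (Real.exp_pos _).le (sum_nonneg fun _ _ => (Real.exp_pos _).le)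

lemma sum_gibbs (hF : F.Nonempty) : ∑ v ∈ F, gibbs F lam φ v = 1 := by
  simp only [gibbs, ← sum_div]
  exact div_self (sum_exp_pos hF _).ne'

/-- The shift `c` cancels between numerator and normalizer. -/
lemma gibbs_le_exp_mul_gibbs (hF : F.Nonempty) {lam : ℝ} (hlam : 0 ≤ lam) {φ φ' : α → ℝ}
    {c Δ : ℝ} (h : ∀ v ∈ F, |φ v - φ' v - c| ≤ Δ) {v : α} (hv : v ∈ F) :
    gibbs F lam φ v ≤ Real.exp (2 * lam * Δ) * gibbs F lam φ' v := by
  have hnum : Real.exp (-lam * φ v) ≤ Real.exp (lam * (Δ - c)) * Real.exp (-lam * φ' v) := by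
    rw [← Real.exp_add, Real.exp_le_exp]
    nlinarith [(abs_le.1 (h v hv)).1]
  have hden : Real.exp (-(lam * (Δ + c))) * ∑ u ∈ F, Real.exp (-lam * φ' u) ≤
      ∑ u ∈ F, Real.exp (-lam * φ u) := by
    rw [mul_sum]
    refine sum_le_sum fun u hu => ?_
    rw [← Real.exp_add, Real.exp_le_exp]
    nlinarith [(abs_le.1 (h u hu)).2]
  have hZ := sum_exp_pos hF fun u => -lam * φ u
  have hZ' := sum_exp_pos hF fun u => -lam * φ' u
  unfold gibbs
  rw [mul_div_assoc', div_le_div_iff₀ hZ hZ']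
  calc Real.exp (-lam * φ v) * ∑ u ∈ F, Real.exp (-lam * φ' u)
      ≤ Real.exp (lam * (Δ - c)) * Real.exp (-lam * φ' v) * ∑ u ∈ F, Real.exp (-lam * φ' u) := by
        gcongr
    _ = Real.exp (2 * lam * Δ) * Real.exp (-lam * φ' v) *
          (Real.exp (-(lam * (Δ + c))) * ∑ u ∈ F, Real.exp (-lam * φ' u)) := by
        have : Real.exp (lam * (Δ - c)) = Real.exp (2 * lam * Δ) * Real.exp (-(lam * (Δ + c))) := by
          rw [← Real.exp_add]; ring_nf
        rw [this]; ring
    _ ≤ Real.exp (2 * lam * Δ) * Real.exp (-lam * φ' v) * ∑ u ∈ F, Real.exp (-lam * φ u) := by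
        gcongr

lemma sum_gibbs_mul_le (hF : F.Nonempty) {lam : ℝ} (hlam : 0 < lam) (φ : α → ℝ) :
    ∑ v ∈ F, gibbs F lam φ v * φ v ≤ F.inf' hF φ + (1 + Real.log #F) / lam := by
  set m := F.inf' hF φ
  set B := Real.log #F / lam
  set Z := ∑ u ∈ F, Real.exp (-lam * φ u)
  have hZ : 0 < Z := sum_exp_pos hF _
  have hK : (0 : ℝ) < #F := by exact_mod_cast hF.card_pos
  obtain ⟨v₀, hv₀, hv₀m⟩ := exists_mem_eq_inf' hF φ
  -- `x ≤ exp x` at `x = lam (φ v - m - B)`; the choice of `B` makes `#F * exp (-lam B) = 1`.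
  have hpoint (v : α) : lam * ((φ v - m - B) * Real.exp (-lam * φ v)) ≤
      Real.exp (-lam * m) / #F := by
    have hx := Real.add_one_le_exp (lam * (φ v - m - B))
    have hlamB : lam * B = Real.log #F := by simp only [B]; field_simp
    have hB : Real.exp (lam * (φ v - m - B)) * Real.exp (-lam * φ v) =
        Real.exp (-lam * m) / #F := by
      rw [← Real.exp_add, show lam * (φ v - m - B) + -lam * φ v = -lam * m + -Real.log #F by
        rw [← hlamB]; ring, Real.exp_add, Real.exp_neg, Real.exp_log hK, div_eq_mul_inv]
    rw [← hB, ← mul_assoc]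
    exact mul_le_mul_of_nonneg_right (by linarith) (Real.exp_pos _).le
  have hsum : lam * (∑ v ∈ F, Real.exp (-lam * φ v) * φ v - (m + B) * Z) ≤ Z :=
    calc lam * (∑ v ∈ F, Real.exp (-lam * φ v) * φ v - (m + B) * Z)
        = ∑ v ∈ F, lam * ((φ v - m - B) * Real.exp (-lam * φ v)) := by
          rw [mul_sum, ← sum_sub_distrib, mul_sum]
          exact sum_congr rfl fun _ _ => by ring
      _ ≤ ∑ _v ∈ F, Real.exp (-lam * m) / #F := sum_le_sum fun v _ => hpoint v
      _ = Real.exp (-lam * φ v₀) := by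
          rw [sum_const, nsmul_eq_mul, show m = φ v₀ from hv₀m]; field_simp
      _ ≤ Z := single_le_sum (f := fun u => Real.exp (-lam * φ u))
          (fun _ _ => (Real.exp_pos _).le) hv₀
  have hdiv : ∑ v ∈ F, Real.exp (-lam * φ v) * φ v - (m + B) * Z ≤ Z / lam := by
    rw [le_div_iff₀ hlam]; linarith
  simp only [gibbs, div_mul_eq_mul_div, ← sum_div]
  rw [div_le_iff₀ hZ]
  calc ∑ v ∈ F, Real.exp (-lam * φ v) * φ v ≤ (m + B) * Z + Z / lam := by linarith
    _ = (m + (1 + Real.log #F) / lam) * Z := by simp only [B]; ring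

end Gibbs

section Preliminaries

lemma abs_ciInf_sub_ciInf_sub_le {ι : Type*} [Nonempty ι] {f g : ι → ℝ}
    (hf : BddBelow (Set.range f)) (hg : BddBelow (Set.range g)) {c δ : ℝ}
    (h : ∀ i, |f i - g i - c| ≤ δ) : |(⨅ i, f i) - (⨅ i, g i) - c| ≤ δ := by
  have hfg : (⨅ i, f i) - c - δ ≤ ⨅ i, g i :=
    le_ciInf fun i => by linarith [ciInf_le hf i, (abs_le.1 (h i)).2]
  have hgf : (⨅ i, g i) + c - δ ≤ ⨅ i, f i :=
    le_ciInf fun i => by linarith [ciInf_le hg i, (abs_le.1 (h i)).1]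
  rw [abs_le]
  constructor <;> linarith

lemma sum_range_two_mul {M : Type*} [AddCommMonoid M] (f : ℕ → M) (m : ℕ) :
    ∑ k ∈ range (2 * m), f k = ∑ j ∈ range m, (f (2 * j) + f (2 * j + 1)) := by
  induction m with
  | zero => simp
  | succ m ih =>
    rw [show 2 * (m + 1) = 2 * m + 1 + 1 by ring, sum_range_succ, sum_range_succ, ih,
      sum_range_succ, add_assoc]

lemma card_filter_card_le_le_pow {α : Type*} [Fintype α] (w : ℕ) :
    #(univ.filter fun A : Finset α => #A ≤ w) ≤ (Fintype.card α + 1) ^ w := by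
  classical
  -- a finset with at most `w` elements is the set of values of some `Fin w → Option α`
  calc #(univ.filter fun A : Finset α => #A ≤ w)
      ≤ #(univ : Finset (Fin w → Option α)) := by
        refine card_le_card_of_surjOn (fun f => (univ.image f).eraseNone) fun A hA => ?_
        have hlen : A.toList.length ≤ w := by simpa using hA
        refine ⟨fun i => A.toList[i.1]?, mem_coe.2 (mem_univ _), ?_⟩
        ext x
        simp only [mem_eraseNone, mem_image, mem_univ, true_and]
        rw [← mem_toList, List.mem_iff_getElem?]
        constructor
        · rintro ⟨i, hi⟩; exact ⟨i.1, hi⟩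
        · rintro ⟨i, hi⟩
          have : i < A.toList.length := by
            by_contra hc; rw [List.getElem?_eq_none (by omega)] at hi; cases hi
          exact ⟨⟨i, by omega⟩, hi⟩
    _ = (Fintype.card α + 1) ^ w := by simp

end Preliminaries

section Width

variable {X : Type*} [Fintype X] [PartialOrder X]

lemma posetWidth_bddAbove :
    BddAbove {k | ∃ A : Finset X, IsAntichain (· ≤ ·) (A : Set X) ∧ #A = k} :=
  ⟨Fintype.card X, by rintro k ⟨A, -, rfl⟩; exact card_le_univ A⟩

lemma card_le_posetWidth {A : Finset X} (hA : IsAntichain (· ≤ ·) (A : Set X)) :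
    #A ≤ posetWidth X :=
  le_csSup posetWidth_bddAbove ⟨A, hA, rfl⟩

lemma one_le_posetWidth [Nonempty X] : 1 ≤ posetWidth X := by
  obtain ⟨x⟩ := ‹Nonempty X›
  simpa using card_le_posetWidth (A := {x}) (by simp)

def minimalsOf (P : X → Prop) : Finset X := by
  classical exact univ.filter fun x => Minimal P x

lemma card_minimalsOf_le (P : X → Prop) : #(minimalsOf P) ≤ posetWidth X :=
  card_le_posetWidth <| by
    classical
    simpa [minimalsOf] using setOfPred_minimal_antichain P

lemma exists_mem_minimalsOf_le {P : X → Prop} {x : X} (hx : P x) :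
    ∃ m ∈ minimalsOf P, m ≤ x := by
  classical
  obtain ⟨m, hmx, hm⟩ := exists_minimal_le_of_wellFoundedLT P x hx
  exact ⟨m, by simpa [minimalsOf] using hm, hmx⟩

lemma prop_of_mem_minimalsOf {P : X → Prop} {m : X} (hm : m ∈ minimalsOf P) : P m := by
  classical
  simp only [minimalsOf, mem_filter] at hm
  exact hm.2.1

end Width

section Dyadic

def dyadic (d β : ℕ) : ℝ := β / 2 ^ d

lemma dyadic_nonneg (d β : ℕ) : 0 ≤ dyadic d β := by unfold dyadic; positivity

lemma dyadic_mono (d : ℕ) {β β' : ℕ} (h : β ≤ β') : dyadic d β ≤ dyadic d β' := by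
  unfold dyadic; gcongr

lemma dyadic_le_one {d β : ℕ} (h : β ≤ 2 ^ d) : dyadic d β ≤ 1 := by
  unfold dyadic
  rw [div_le_one (by positivity)]
  exact_mod_cast h

lemma dyadic_succ (d β : ℕ) : dyadic d (β + 1) = dyadic d β + (2 ^ d)⁻¹ := by
  unfold dyadic; push_cast; ring

lemma dyadic_two_mul (d β : ℕ) : dyadic (d + 1) (2 * β) = dyadic d β := by
  unfold dyadic; push_cast; rw [pow_succ]; field_simp

lemma dyadic_two_mul_add_two (d β : ℕ) :
    dyadic (d + 1) (2 * β + 2) = dyadic d β + (2 ^ d)⁻¹ := by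
  rw [show 2 * β + 2 = 2 * (β + 1) by ring, dyadic_two_mul, dyadic_succ]

end Dyadic

section LipschitzLoss

variable {L : ℝ} {ℓ : ℝ → ℝ → ℝ}

lemma _root_.IsLipschitzLoss.lipschitz_nonneg (hℓ : IsLipschitzLoss ℓ L) : 0 ≤ L := by
  have h := hℓ.2 0 1 0 (by norm_num) (by norm_num) (by norm_num)
  norm_num at h
  exact (abs_nonneg _).trans h

lemma _root_.IsLipschitzLoss.abs_sub_le (hℓ : IsLipschitzLoss ℓ L) {v ρ y z : ℝ} (hv : 0 ≤ v)
    (hρ : v + ρ ≤ 1) (hy : y ∈ Set.Icc v (v + ρ)) (hz : z ∈ Set.Icc (0 : ℝ) 1) :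
    |ℓ y z - ℓ v z| ≤ L * ρ := by
  have hyv : |y - v| ≤ ρ := abs_le.2 ⟨by linarith [hy.1, hy.2], by linarith [hy.2]⟩
  calc |ℓ y z - ℓ v z| ≤ L * |y - v| :=
        hℓ.2 y v z ⟨hv.trans hy.1, hy.2.trans hρ⟩ ⟨hv, by linarith [hy.1, hy.2]⟩ hz
    _ ≤ L * ρ := mul_le_mul_of_nonneg_left hyv hℓ.lipschitz_nonneg

end LipschitzLoss

section BandRisk

variable {X : Type*} [PartialOrder X] {L : ℝ} (ℓ : ℝ → ℝ → ℝ) {n : ℕ} (D : Fin n → X × ℝ)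

def bandRisk (J : Finset (Fin n)) (a b : ℝ) : ℝ :=
  ⨅ h : {h : X → ℝ // Monotone h ∧ ∀ x, h x ∈ Set.Icc a b}, ∑ i ∈ J, ℓ (h.1 (D i).1) (D i).2 / n

variable {ℓ D}

lemma nonempty_monotone_Icc {a b : ℝ} (hab : a ≤ b) :
    Nonempty {h : X → ℝ // Monotone h ∧ ∀ x, h x ∈ Set.Icc a b} :=
  ⟨⟨fun _ => a, monotone_const, fun _ => ⟨le_rfl, hab⟩⟩⟩

lemma bddBelow_bandRisk (hℓ : IsLipschitzLoss ℓ L) (hD : IsDataset D) {a b : ℝ}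
    (ha : 0 ≤ a) (hb : b ≤ 1) (J : Finset (Fin n)) :
    BddBelow (Set.range fun h : {h : X → ℝ // Monotone h ∧ ∀ x, h x ∈ Set.Icc a b} =>
      ∑ i ∈ J, ℓ (h.1 (D i).1) (D i).2 / n) := by
  refine ⟨0, ?_⟩
  rintro r ⟨h, rfl⟩
  have hx (x : X) := h.2.2 x
  exact sum_nonneg fun i _ => div_nonneg
    (hℓ.1 _ _ ⟨ha.trans (hx _).1, (hx _).2.trans hb⟩ (hD i)) (Nat.cast_nonneg n)

lemma bandRisk_le (hℓ : IsLipschitzLoss ℓ L) (hD : IsDataset D) {a b : ℝ} (ha : 0 ≤ a)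
    (hb : b ≤ 1) (J : Finset (Fin n)) {h : X → ℝ} (hmono : Monotone h)
    (hab : ∀ x, h x ∈ Set.Icc a b) :
    bandRisk ℓ D J a b ≤ ∑ i ∈ J, ℓ (h (D i).1) (D i).2 / n :=
  ciInf_le (bddBelow_bandRisk hℓ hD ha hb J) ⟨h, hmono, hab⟩

lemma le_bandRisk {a b : ℝ} (hab : a ≤ b) (J : Finset (Fin n)) {c : ℝ}
    (H : ∀ h : X → ℝ, Monotone h → (∀ x, h x ∈ Set.Icc a b) →
      c ≤ ∑ i ∈ J, ℓ (h (D i).1) (D i).2 / n) :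
    c ≤ bandRisk ℓ D J a b :=
  have := nonempty_monotone_Icc (X := X) hab
  le_ciInf fun h => H h.1 h.2.1 h.2.2

lemma bandRisk_congr {D' : Fin n → X × ℝ} {J : Finset (Fin n)} (H : ∀ i ∈ J, D i = D' i)
    (a b : ℝ) : bandRisk ℓ D J a b = bandRisk ℓ D' J a b :=
  iInf_congr fun _ => sum_congr rfl fun i hi => by rw [H i hi]

lemma abs_bandRisk_sub_bandRisk_erase_le (hℓ : IsLipschitzLoss ℓ L) (hD : IsDataset D)
    {J : Finset (Fin n)} {i : Fin n} (hi : i ∈ J) {a b v ρ : ℝ} (hab : a ≤ b)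
    (hsub : Set.Icc a b ⊆ Set.Icc v (v + ρ)) (hv : 0 ≤ v) (hρ : v + ρ ≤ 1) :
    |bandRisk ℓ D J a b - bandRisk ℓ D (J.erase i) a b - ℓ v (D i).2 / n| ≤ L * ρ / n := by
  have ha : 0 ≤ a := hv.trans (hsub ⟨le_rfl, hab⟩).1
  have hb : b ≤ 1 := (hsub ⟨hab, le_rfl⟩).2.trans hρ
  have := nonempty_monotone_Icc (X := X) hab
  refine abs_ciInf_sub_ciInf_sub_le (bddBelow_bandRisk hℓ hD ha hb _)
    (bddBelow_bandRisk hℓ hD ha hb _) fun h => ?_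
  rw [← sum_erase_add _ _ hi, add_sub_cancel_left, ← sub_div, abs_div, Nat.abs_cast]
  gcongr
  exact hℓ.abs_sub_le hv hρ (hsub (h.2.2 _)) (hD i)

end BandRisk

section Refinements

variable {X : Type*}

def gridMaps [Fintype X] [DecidableEq X] (d : ℕ) : Finset (X → ℕ) :=
  Fintype.piFinset fun _ => range (2 ^ d)

lemma mem_gridMaps [Fintype X] [DecidableEq X] {d : ℕ} {g : X → ℕ} :
    g ∈ gridMaps d ↔ ∀ x, g x < 2 ^ d := by
  simp [gridMaps]

variable [PartialOrder X]

/-- `g x = β` at level `d` confines the value at `x` to the dyadic interval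
`[β / 2^d, (β + 1) / 2^d]`. -/
def IsGridMap (d : ℕ) (g : X → ℕ) : Prop := Monotone g ∧ ∀ x, g x < 2 ^ d

lemma isGridMap_zero : IsGridMap (X := X) 0 fun _ => 0 :=
  ⟨monotone_const, fun _ => Nat.one_pos⟩

def refinements [Fintype X] [DecidableEq X] [DecidableLE X] (g : X → ℕ) : Finset (X → ℕ) :=
  (Fintype.piFinset fun x => ({2 * g x, 2 * g x + 1} : Finset ℕ)).filter
    fun g' => ∀ x y, x ≤ y → g x = g y → g' x ≤ g' y

variable [Fintype X] [DecidableEq X] [DecidableLE X] {g g' : X → ℕ} {d : ℕ}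

lemma mem_refinements :
    g' ∈ refinements g ↔ (∀ x, g' x = 2 * g x ∨ g' x = 2 * g x + 1) ∧
      ∀ x y, x ≤ y → g x = g y → g' x ≤ g' y := by
  simp [refinements]

lemma refinements_nonempty (g : X → ℕ) : (refinements g).Nonempty :=
  ⟨fun x => 2 * g x, mem_refinements.2 ⟨fun _ => Or.inl rfl, fun _ _ _ h => by rw [h]⟩⟩

lemma IsGridMap.of_mem_refinements (hg : IsGridMap d g) (hg' : g' ∈ refinements g) :
    IsGridMap (d + 1) g' := by
  obtain ⟨hsplit, hmono⟩ := mem_refinements.1 hg'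
  refine ⟨fun x y hxy => ?_, fun x => ?_⟩
  · rcases (hg.1 hxy).lt_or_eq with h | h
    · rcases hsplit x with h1 | h1 <;> rcases hsplit y with h2 | h2 <;> omega
    · exact hmono x y hxy h
  · have := hg.2 x
    rcases hsplit x with h | h <;> rw [h, pow_succ] <;> omega

lemma refinements_subset_gridMaps (hg : ∀ x, g x < 2 ^ d) :
    refinements g ⊆ gridMaps (d + 1) := fun g' hg' => by
  rw [mem_gridMaps]
  intro x
  have := hg x
  rcases (mem_refinements.1 hg').1 x with h | h <;> rw [h, pow_succ] <;> omega

/-- A refinement is determined, on each level set of `g`, by the minimal points sent to the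
odd value; these form an antichain, so there are at most `(|X| + 1)^width` choices per level set. -/
lemma card_refinements_le (hg : ∀ x, g x < 2 ^ d) :
    #(refinements g) ≤ ((Fintype.card X + 1) ^ posetWidth X) ^ 2 ^ d := by
  let upper (g' : X → ℕ) (β : ℕ) (x : X) : Prop := g' x = 2 * g x + 1 ∧ g x = β
  let code (g' : X → ℕ) (β : Fin (2 ^ d)) : Finset X := minimalsOf (upper g' β.1)
  have hrecover : ∀ g' ∈ refinements g, ∀ x,
      g' x = 2 * g x + 1 ↔ ∃ m ∈ code g' ⟨g x, hg x⟩, m ≤ x := by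
    intro g' hg' x
    obtain ⟨hsplit, hmono⟩ := mem_refinements.1 hg'
    refine ⟨fun hx => exists_mem_minimalsOf_le ⟨hx, rfl⟩, ?_⟩
    rintro ⟨m, hm, hmx⟩
    obtain ⟨hm1, hm2⟩ : upper g' (g x) m := prop_of_mem_minimalsOf hm
    have := hmono m x hmx hm2
    rcases hsplit x with h | h <;> omega
  have hinj : Set.InjOn code (refinements g) := by
    intro g₁ h₁ g₂ h₂ hcode
    funext x
    have e₁ := hrecover g₁ h₁ x
    have e₂ := hrecover g₂ h₂ x
    rw [hcode] at e₁
    by_cases hP : ∃ m ∈ code g₂ ⟨g x, hg x⟩, m ≤ x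
    · rw [e₁.2 hP, e₂.2 hP]
    · have n₁ := mt e₁.1 hP
      have n₂ := mt e₂.1 hP
      rcases (mem_refinements.1 h₁).1 x with h | h <;>
        rcases (mem_refinements.1 h₂).1 x with h' | h' <;> omega
  calc #(refinements g)
      ≤ #(Fintype.piFinset fun _ : Fin (2 ^ d) => univ.filter fun A : Finset X =>
          #A ≤ posetWidth X) :=
        card_le_card_of_injOn code (fun g' _ => by
          simpa [Fintype.mem_piFinset] using fun β => card_minimalsOf_le _) hinj
    _ ≤ ((Fintype.card X + 1) ^ posetWidth X) ^ 2 ^ d := by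
        rw [Fintype.card_piFinset, prod_const, card_univ, Fintype.card_fin]
        exact Nat.pow_le_pow_left (card_filter_card_le_le_pow _) _

end Refinements

section Potential

variable {X : Type*} {L : ℝ} (ℓ : ℝ → ℝ → ℝ) {n : ℕ} (D : Fin n → X × ℝ)

def band (g : X → ℕ) (β : ℕ) : Finset (Fin n) := univ.filter fun i => g (D i).1 = β

section Band

variable {D}

@[simp]
lemma mem_band {g : X → ℕ} {β : ℕ} {i : Fin n} : i ∈ band D g β ↔ g (D i).1 = β := by
  simp [band]

lemma sum_range_sum_band {d : ℕ} {g : X → ℕ} (hg : ∀ x, g x < 2 ^ d) (f : Fin n → ℝ) :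
    ∑ β ∈ range (2 ^ d), ∑ i ∈ band D g β, f i = ∑ i, f i :=
  sum_fiberwise_of_maps_to (fun _ _ => mem_range.2 (hg _)) f

end Band

variable [PartialOrder X]

def potential (d : ℕ) (g : X → ℕ) : ℝ :=
  ∑ β ∈ range (2 ^ d), bandRisk ℓ D (band D g β) (dyadic d β) (dyadic d (β + 1))

variable {ℓ D}

lemma potential_zero : potential ℓ D 0 (fun _ => 0) = optRisk ℓ D := by
  have hband : band D (fun _ : X => 0) 0 = univ := filter_true_of_mem fun _ _ => rfl
  have h0 : dyadic 0 0 = 0 := by simp [dyadic]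
  have h1 : dyadic 0 1 = 1 := by simp [dyadic]
  rw [potential, pow_zero, sum_range_one, hband, zero_add, h0, h1]
  simp only [bandRisk, optRisk, empRisk, IsMonotone01, mul_sum, one_div_mul_eq_div]

lemma sum_loss_div_le_bandRisk_add (hℓ : IsLipschitzLoss ℓ L) (hD : IsDataset D)
    (J : Finset (Fin n)) {v ρ : ℝ} (hv : 0 ≤ v) (hρ : 0 ≤ ρ) (hvρ : v + ρ ≤ 1) :
    ∑ i ∈ J, ℓ v (D i).2 / n ≤ bandRisk ℓ D J v (v + ρ) + ∑ _i ∈ J, L * ρ / n := by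
  rw [← sub_le_iff_le_add, ← sum_sub_distrib]
  refine le_bandRisk (by linarith) J fun h _ hh => sum_le_sum fun i _ => ?_
  rw [← sub_div]
  gcongr
  have := hℓ.abs_sub_le hv hvρ (hh (D i).1) (hD i)
  linarith [(abs_le.1 this).1]

lemma empRisk_le_potential_add (hℓ : IsLipschitzLoss ℓ L) (hD : IsDataset D) {T : ℕ}
    {g : X → ℕ} (hg : IsGridMap T g) :
    empRisk ℓ (fun x => dyadic T (g x)) D ≤ potential ℓ D T g + L / 2 ^ T := by
  have hsum : ∑ _i : Fin n, L * (2 ^ T)⁻¹ / n ≤ L / 2 ^ T := by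
    rcases n.eq_zero_or_pos with rfl | hn
    · simp [div_nonneg hℓ.lipschitz_nonneg]
    · rw [sum_const, card_univ, Fintype.card_fin, nsmul_eq_mul, mul_div_cancel₀ _ (by positivity),
        div_eq_mul_inv]
  calc empRisk ℓ (fun x => dyadic T (g x)) D
      = ∑ β ∈ range (2 ^ T), ∑ i ∈ band D g β, ℓ (dyadic T β) (D i).2 / n := by
        rw [empRisk, mul_sum, ← sum_range_sum_band hg.2]
        refine sum_congr rfl fun β _ => sum_congr rfl fun i hi => ?_
        rw [mem_band.1 hi, one_div_mul_eq_div]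
    _ ≤ ∑ β ∈ range (2 ^ T), (bandRisk ℓ D (band D g β) (dyadic T β) (dyadic T (β + 1)) +
          ∑ i ∈ band D g β, L * (2 ^ T)⁻¹ / n) := by
        refine sum_le_sum fun β hβ => ?_
        rw [dyadic_succ]
        exact sum_loss_div_le_bandRisk_add hℓ hD _ (dyadic_nonneg T β) (by positivity)
          (by rw [← dyadic_succ]; exact dyadic_le_one (mem_range.1 hβ))
    _ ≤ potential ℓ D T g + L / 2 ^ T := by
        rw [sum_add_distrib, sum_range_sum_band hg.2]
        exact add_le_add le_rfl hsum

end Potential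

section Sensitivity

variable {X : Type*} [PartialOrder X] {L : ℝ} {ℓ : ℝ → ℝ → ℝ} {n : ℕ} {D : Fin n → X × ℝ}

lemma potential_eq_sum_erase_add {d : ℕ} {g : X → ℕ} {i : Fin n} (hi : g (D i).1 < 2 ^ d) :
    potential ℓ D d g =
      ∑ β ∈ range (2 ^ d), bandRisk ℓ D ((band D g β).erase i) (dyadic d β) (dyadic d (β + 1)) +
      (bandRisk ℓ D (band D g (g (D i).1)) (dyadic d (g (D i).1)) (dyadic d (g (D i).1 + 1)) -
        bandRisk ℓ D ((band D g (g (D i).1)).erase i) (dyadic d (g (D i).1))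
          (dyadic d (g (D i).1 + 1))) := by
  rw [← sub_eq_iff_eq_add', potential, ← sum_sub_distrib,
    sum_eq_single_of_mem _ (mem_range.2 hi)]
  intro β _ hβ
  rw [erase_eq_of_notMem (by simpa using Ne.symm hβ), sub_self]

variable [Fintype X] [DecidableEq X] [DecidableLE X]

lemma Icc_dyadic_subset_of_mem_refinements {d : ℕ} {g g' : X → ℕ} (hg' : g' ∈ refinements g)
    (x : X) : Set.Icc (dyadic (d + 1) (g' x)) (dyadic (d + 1) (g' x + 1)) ⊆
      Set.Icc (dyadic d (g x)) (dyadic d (g x) + (2 ^ d)⁻¹) := by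
  rw [← dyadic_two_mul_add_two d (g x), ← dyadic_two_mul d (g x)]
  rcases (mem_refinements.1 hg').1 x with h | h <;> rw [h] <;>
    apply Set.Icc_subset_Icc <;> apply dyadic_mono <;> omega

lemma abs_potential_sub_sum_erase_sub_le (hℓ : IsLipschitzLoss ℓ L) (hD : IsDataset D)
    {d : ℕ} {g g' : X → ℕ} (hg : IsGridMap d g) (hg' : g' ∈ refinements g) (i : Fin n) :
    |potential ℓ D (d + 1) g' -
        ∑ γ ∈ range (2 ^ (d + 1)),
          bandRisk ℓ D ((band D g' γ).erase i) (dyadic (d + 1) γ) (dyadic (d + 1) (γ + 1)) -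
        ℓ (dyadic d (g (D i).1)) (D i).2 / n| ≤ L * (2 ^ d)⁻¹ / n := by
  rw [potential_eq_sum_erase_add ((hg.of_mem_refinements hg').2 _), add_sub_cancel_left]
  have hup : dyadic d (g (D i).1) + (2 ^ d)⁻¹ ≤ 1 := by
    rw [← dyadic_succ]; exact dyadic_le_one (hg.2 _)
  exact abs_bandRisk_sub_bandRisk_erase_le hℓ hD (mem_band.2 rfl)
    (dyadic_mono _ (Nat.le_succ _)) (Icc_dyadic_subset_of_mem_refinements hg' _)
    (dyadic_nonneg _ _) hup

/-- The shift does not depend on the refinement `g'`, so it cancels in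
`gibbs_le_exp_mul_gibbs`. -/
lemma abs_potential_sub_potential_sub_le (hℓ : IsLipschitzLoss ℓ L) {D' : Fin n → X × ℝ}
    (hD : IsDataset D) (hD' : IsDataset D') {i : Fin n} (hDD' : ∀ j, j ≠ i → D j = D' j)
    {d : ℕ} {g g' : X → ℕ} (hg : IsGridMap d g) (hg' : g' ∈ refinements g) :
    |potential ℓ D (d + 1) g' - potential ℓ D' (d + 1) g' -
        (ℓ (dyadic d (g (D i).1)) (D i).2 / n - ℓ (dyadic d (g (D' i).1)) (D' i).2 / n)| ≤
      2 * (L * (2 ^ d)⁻¹ / n) := by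
  have hrest : ∀ γ : ℕ, ∀ a b : ℝ,
      bandRisk ℓ D ((band D g' γ).erase i) a b = bandRisk ℓ D' ((band D' g' γ).erase i) a b := by
    intro γ a b
    have hband : (band D g' γ).erase i = (band D' g' γ).erase i := by
      ext j
      simp only [mem_erase, mem_band]
      exact and_congr_right fun hj => by rw [hDD' j hj]
    rw [hband]
    exact bandRisk_congr (fun j hj => hDD' j (mem_erase.1 hj).1) a b
  have h := abs_le.1 (abs_potential_sub_sum_erase_sub_le hℓ hD hg hg' i)
  have h' := abs_le.1 (abs_potential_sub_sum_erase_sub_le hℓ hD' hg hg' i)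
  simp only [hrest] at h
  rw [abs_le]
  constructor <;> linarith [h.1, h.2, h'.1, h'.2]

end Sensitivity

section Splitting

variable {X : Type*} {L : ℝ} {ℓ : ℝ → ℝ → ℝ} {n : ℕ} {D : Fin n → X × ℝ}

def splitBy (d : ℕ) (g : X → ℕ) (h : ℕ → X → ℝ) (x : X) : ℕ :=
  if h (g x) x < dyadic (d + 1) (2 * g x + 1) then 2 * g x else 2 * g x + 1

variable {d : ℕ} {g : X → ℕ} {h : ℕ → X → ℝ}

lemma band_splitBy_two_mul (β : ℕ) :
    band D (splitBy d g h) (2 * β) =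
      (band D g β).filter fun i => h β (D i).1 < dyadic (d + 1) (2 * β + 1) := by
  ext i
  simp only [mem_band, mem_filter, splitBy]
  split_ifs with hi <;> constructor <;> intro H
  · exact ⟨by omega, by rwa [show g (D i).1 = β by omega] at hi⟩
  · rw [H.1]
  · omega
  · exact absurd (H.1 ▸ H.2) hi

lemma band_splitBy_two_mul_add_one (β : ℕ) :
    band D (splitBy d g h) (2 * β + 1) =
      (band D g β).filter fun i => ¬h β (D i).1 < dyadic (d + 1) (2 * β + 1) := by
  ext i
  simp only [mem_band, mem_filter, splitBy]
  split_ifs with hi <;> constructor <;> intro H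
  · omega
  · exact absurd (H.1 ▸ hi) H.2
  · exact ⟨by omega, by rwa [show g (D i).1 = β by omega] at hi⟩
  · rw [H.1]

variable [PartialOrder X]

/-- Clipping a monotone `h` to `[a, m]` and to `[m, b]` shows that splitting its points at the
level `m` costs nothing. -/
lemma bandRisk_filter_lt_add_bandRisk_filter_not_lt_le (hℓ : IsLipschitzLoss ℓ L)
    (hD : IsDataset D) (J : Finset (Fin n)) {a m b : ℝ} (ha : 0 ≤ a) (ham : a ≤ m) (hmb : m ≤ b)
    (hb : b ≤ 1) {h : X → ℝ} (hmono : Monotone h) (hab : ∀ x, h x ∈ Set.Icc a b) :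
    bandRisk ℓ D (J.filter fun i => h (D i).1 < m) a m +
        bandRisk ℓ D (J.filter fun i => ¬h (D i).1 < m) m b ≤
      ∑ i ∈ J, ℓ (h (D i).1) (D i).2 / n := by
  rw [← sum_filter_add_sum_filter_not J fun i => h (D i).1 < m]
  gcongr
  · refine (bandRisk_le hℓ hD ha (hmb.trans hb) _ (hmono.min monotone_const)
      fun x => ⟨le_min (hab x).1 ham, min_le_right _ _⟩).trans_eq (sum_congr rfl fun i hi => ?_)
    rw [min_eq_left (mem_filter.1 hi).2.le]
  · refine (bandRisk_le hℓ hD (ha.trans ham) hb _ (hmono.max monotone_const)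
      fun x => ⟨le_max_right _ _, max_le (hab x).2 hmb⟩).trans_eq (sum_congr rfl fun i hi => ?_)
    rw [max_eq_left (not_lt.1 (mem_filter.1 hi).2)]

lemma potential_splitBy_le (hℓ : IsLipschitzLoss ℓ L) (hD : IsDataset D)
    (hh : ∀ β, Monotone (h β)) (hhd : ∀ β x, h β x ∈ Set.Icc (dyadic d β) (dyadic d (β + 1))) :
    potential ℓ D (d + 1) (splitBy d g h) ≤
      ∑ β ∈ range (2 ^ d), ∑ i ∈ band D g β, ℓ (h β (D i).1) (D i).2 / n := by
  rw [potential, pow_succ, mul_comm, sum_range_two_mul]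
  refine sum_le_sum fun β hβ => ?_
  rw [band_splitBy_two_mul, band_splitBy_two_mul_add_one, dyadic_two_mul,
    show 2 * β + 1 + 1 = 2 * (β + 1) by ring, dyadic_two_mul]
  exact bandRisk_filter_lt_add_bandRisk_filter_not_lt_le hℓ hD _ (dyadic_nonneg _ _)
    (by rw [← dyadic_two_mul d β]; exact dyadic_mono _ (by omega))
    (by rw [← dyadic_two_mul d (β + 1)]; exact dyadic_mono _ (by omega))
    (dyadic_le_one (mem_range.1 hβ)) (hh β) (hhd β)

variable [Fintype X] [DecidableEq X] [DecidableLE X]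

lemma splitBy_mem_refinements (hh : ∀ β, Monotone (h β)) : splitBy d g h ∈ refinements g := by
  refine mem_refinements.2 ⟨fun x => ?_, fun x y hxy hgxy => ?_⟩
  · unfold splitBy; split_ifs <;> simp
  · have := hh (g y) hxy
    unfold splitBy
    rw [hgxy]
    split_ifs <;> first | omega | linarith

lemma exists_mem_refinements_potential_le (hℓ : IsLipschitzLoss ℓ L) (hD : IsDataset D)
    (g : X → ℕ) (d : ℕ) {η : ℝ} (hη : 0 < η) :
    ∃ g' ∈ refinements g, potential ℓ D (d + 1) g' ≤ potential ℓ D d g + η := by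
  have hnear (β : ℕ) : ∃ f : {f : X → ℝ // Monotone f ∧
      ∀ x, f x ∈ Set.Icc (dyadic d β) (dyadic d (β + 1))},
      ∑ i ∈ band D g β, ℓ (f.1 (D i).1) (D i).2 / n <
        bandRisk ℓ D (band D g β) (dyadic d β) (dyadic d (β + 1)) + η / 2 ^ d :=
    have := nonempty_monotone_Icc (X := X) (dyadic_mono d (Nat.le_succ β))
    exists_lt_of_ciInf_lt (lt_add_of_pos_right _ (by positivity))
  choose f hf using hnear
  refine ⟨splitBy d g fun β => (f β).1, splitBy_mem_refinements fun β => (f β).2.1, ?_⟩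
  calc potential ℓ D (d + 1) (splitBy d g fun β => (f β).1)
      ≤ ∑ β ∈ range (2 ^ d), ∑ i ∈ band D g β, ℓ ((f β).1 (D i).1) (D i).2 / n :=
        potential_splitBy_le hℓ hD (fun β => (f β).2.1) fun β => (f β).2.2
    _ ≤ ∑ β ∈ range (2 ^ d),
          (bandRisk ℓ D (band D g β) (dyadic d β) (dyadic d (β + 1)) + η / 2 ^ d) :=
        sum_le_sum fun β _ => (hf β).le
    _ = potential ℓ D d g + η := by
        rw [sum_add_distrib, sum_const, card_range, nsmul_eq_mul, potential]
        push_cast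
        field_simp

lemma inf'_potential_refinements_le (hℓ : IsLipschitzLoss ℓ L) (hD : IsDataset D)
    (g : X → ℕ) (d : ℕ) :
    (refinements g).inf' (refinements_nonempty g) (potential ℓ D (d + 1)) ≤ potential ℓ D d g :=
  le_of_forall_pos_le_add fun _ hη =>
    have ⟨_, hg', hle⟩ := exists_mem_refinements_potential_le hℓ hD g d hη
    (inf'_le _ hg').trans hle

end Splitting

section Rounds

variable {X : Type*} [PartialOrder X] [Fintype X] [DecidableEq X] [DecidableLE X]
  {ℓ : ℝ → ℝ → ℝ} {n : ℕ} {D : Fin n → X × ℝ} {ε₀ L : ℝ}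

variable (n) in
/-- The inverse temperature `ε₀ / (2 Δ_d)` of the exponential mechanism at level `d`, where
`Δ_d = 2 L / (2^d n)` is the sensitivity from `abs_potential_sub_potential_sub_le`. -/
def invTemp (ε₀ L : ℝ) (d : ℕ) : ℝ := ε₀ * 2 ^ d * n / (4 * L)

variable (ℓ D ε₀ L) in
def transition (d : ℕ) (g g' : X → ℕ) : ℝ :=
  if g' ∈ refinements g then gibbs (refinements g) (invTemp n ε₀ L d) (potential ℓ D (d + 1)) g'
  else 0

variable (ℓ D ε₀ L) in
def stateDist : ℕ → (X → ℕ) → ℝ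
  | 0 => fun g => if g = fun _ => 0 then 1 else 0
  | d + 1 => fun g' => ∑ g ∈ gridMaps d, stateDist d g * transition ℓ D ε₀ L d g g'

lemma transition_nonneg (d : ℕ) (g g' : X → ℕ) : 0 ≤ transition ℓ D ε₀ L d g g' := by
  unfold transition
  split_ifs
  exacts [gibbs_nonneg _ _ _, le_rfl]

lemma sum_transition_mul {d : ℕ} {g : X → ℕ} (hg : ∀ x, g x < 2 ^ d) (f : (X → ℕ) → ℝ) :
    ∑ g' ∈ gridMaps (d + 1), transition ℓ D ε₀ L d g g' * f g' =
      ∑ g' ∈ refinements g, gibbs (refinements g) (invTemp n ε₀ L d) (potential ℓ D (d + 1)) g' *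
        f g' := by
  simp only [transition, ite_mul, zero_mul]
  rw [sum_ite_mem, inter_eq_right.2 (refinements_subset_gridMaps hg)]

lemma sum_transition {d : ℕ} {g : X → ℕ} (hg : ∀ x, g x < 2 ^ d) :
    ∑ g' ∈ gridMaps (d + 1), transition ℓ D ε₀ L d g g' = 1 := by
  simpa [sum_gibbs _ _ (refinements_nonempty g)] using
    sum_transition_mul (ℓ := ℓ) (D := D) (ε₀ := ε₀) (L := L) hg 1

lemma transition_le_exp_mul (hℓ : IsLipschitzLoss ℓ L) (hL : 0 < L) (hn : 0 < n)
    {D' : Fin n → X × ℝ} (hD : IsDataset D) (hD' : IsDataset D') {i : Fin n}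
    (hDD' : ∀ j, j ≠ i → D j = D' j) (hε₀ : 0 ≤ ε₀) {d : ℕ} {g : X → ℕ} (hg : IsGridMap d g)
    (g' : X → ℕ) :
    transition ℓ D ε₀ L d g g' ≤ Real.exp ε₀ * transition ℓ D' ε₀ L d g g' := by
  unfold transition
  split_ifs with hg'
  · have key := gibbs_le_exp_mul_gibbs (refinements_nonempty g)
      (by unfold invTemp; positivity : 0 ≤ invTemp n ε₀ L d)
      (fun v hv => abs_potential_sub_potential_sub_le hℓ hD hD' hDD' hg hv) hg'
    have hexp : 2 * invTemp n ε₀ L d * (2 * (L * (2 ^ d)⁻¹ / n)) = ε₀ := by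
      unfold invTemp
      field_simp
      ring
    rwa [hexp] at key
  · rw [mul_zero]

lemma stateDist_nonneg : ∀ d (g : X → ℕ), 0 ≤ stateDist ℓ D ε₀ L d g
  | 0, g => by unfold stateDist; split_ifs <;> norm_num
  | d + 1, _ => sum_nonneg fun g _ =>
      mul_nonneg (stateDist_nonneg d g) (transition_nonneg _ _ _)

lemma isGridMap_of_stateDist_ne_zero : ∀ {d} {g : X → ℕ}, stateDist ℓ D ε₀ L d g ≠ 0 →
    IsGridMap d g
  | 0, g, h => by
    unfold stateDist at h
    split_ifs at h with hg
    · exact hg ▸ isGridMap_zero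
    · exact absurd rfl h
  | d + 1, g', h => by
    obtain ⟨g, -, hg⟩ := exists_ne_zero_of_sum_ne_zero h
    have hg' : g' ∈ refinements g := by
      by_contra hc
      simp [transition, hc] at hg
    exact (isGridMap_of_stateDist_ne_zero (left_ne_zero_of_mul hg)).of_mem_refinements hg'

lemma sum_stateDist_mul_le_sum_stateDist_mul {d : ℕ} (F : (X → ℕ) → ℝ) {G : (X → ℕ) → ℝ}
    (hFG : ∀ g, IsGridMap d g → F g ≤ G g) :
    ∑ g ∈ gridMaps d, stateDist ℓ D ε₀ L d g * F g ≤
      ∑ g ∈ gridMaps d, stateDist ℓ D ε₀ L d g * G g := by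
  refine sum_le_sum fun g _ => ?_
  rcases eq_or_ne (stateDist ℓ D ε₀ L d g) 0 with h | h
  · simp [h]
  · exact mul_le_mul_of_nonneg_left (hFG g (isGridMap_of_stateDist_ne_zero h))
      (stateDist_nonneg d g)

lemma sum_stateDist : ∀ d, ∑ g ∈ gridMaps (X := X) d, stateDist ℓ D ε₀ L d g = 1
  | 0 => by
    simp only [stateDist]
    rw [sum_ite_eq' _ _ (fun _ => (1 : ℝ)), if_pos (mem_gridMaps.2 fun _ => Nat.one_pos)]
  | d + 1 => by
    simp only [stateDist]
    rw [sum_comm]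
    calc ∑ g ∈ gridMaps d, ∑ g' ∈ gridMaps (d + 1),
          stateDist ℓ D ε₀ L d g * transition ℓ D ε₀ L d g g'
        = ∑ g ∈ gridMaps d, stateDist ℓ D ε₀ L d g * 1 := by
          simp only [← mul_sum]
          refine le_antisymm (sum_stateDist_mul_le_sum_stateDist_mul _ fun g hg => (sum_transition hg.2).le)
            (sum_stateDist_mul_le_sum_stateDist_mul _ fun g hg => (sum_transition hg.2).ge)
      _ = 1 := by simp only [mul_one, sum_stateDist d]

lemma stateDist_le_exp_mul (hℓ : IsLipschitzLoss ℓ L) (hL : 0 < L) (hn : 0 < n)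
    {D' : Fin n → X × ℝ} (hD : IsDataset D) (hD' : IsDataset D') {i : Fin n}
    (hDD' : ∀ j, j ≠ i → D j = D' j) (hε₀ : 0 ≤ ε₀) :
    ∀ d (g : X → ℕ), stateDist ℓ D ε₀ L d g ≤ Real.exp (d * ε₀) * stateDist ℓ D' ε₀ L d g
  | 0, g => by simp [stateDist]
  | d + 1, g' => by
    simp only [stateDist, mul_sum]
    refine sum_le_sum fun g _ => ?_
    rcases eq_or_ne (stateDist ℓ D ε₀ L d g) 0 with h | h
    · rw [h, zero_mul]
      exact mul_nonneg (Real.exp_pos _).le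
        (mul_nonneg (stateDist_nonneg d g) (transition_nonneg _ _ _))
    · calc stateDist ℓ D ε₀ L d g * transition ℓ D ε₀ L d g g'
          ≤ (Real.exp (d * ε₀) * stateDist ℓ D' ε₀ L d g) *
              (Real.exp ε₀ * transition ℓ D' ε₀ L d g g') :=
            mul_le_mul (stateDist_le_exp_mul hℓ hL hn hD hD' hDD' hε₀ d g)
              (transition_le_exp_mul hℓ hL hn hD hD' hDD' hε₀
                (isGridMap_of_stateDist_ne_zero h) g')
              (transition_nonneg _ _ _)
              (mul_nonneg (Real.exp_pos _).le (stateDist_nonneg d g))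
        _ = Real.exp ((d + 1 : ℕ) * ε₀) *
              (stateDist ℓ D' ε₀ L d g * transition ℓ D' ε₀ L d g g') := by
            rw [Nat.cast_succ, add_one_mul, Real.exp_add]; ring

end Rounds

section Utility

variable {X : Type*} [PartialOrder X] [Fintype X] [DecidableEq X] [DecidableLE X]
  {ℓ : ℝ → ℝ → ℝ} {n : ℕ} {D : Fin n → X × ℝ} {ε₀ L : ℝ}

lemma log_card_refinements_le {d : ℕ} {g : X → ℕ} (hg : ∀ x, g x < 2 ^ d) :
    Real.log #(refinements g) ≤ 2 ^ d * (posetWidth X * Real.log (Fintype.card X + 1)) := by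
  have hpos : (0 : ℝ) < #(refinements g) := by exact_mod_cast (refinements_nonempty g).card_pos
  calc Real.log #(refinements g)
      ≤ Real.log (((Fintype.card X + 1) ^ posetWidth X) ^ 2 ^ d : ℕ) :=
        Real.log_le_log hpos (by exact_mod_cast card_refinements_le hg)
    _ = 2 ^ d * (posetWidth X * Real.log (Fintype.card X + 1)) := by
        push_cast
        rw [Real.log_pow, Real.log_pow]
        push_cast
        ring

def roundError (X : Type*) [Fintype X] [PartialOrder X] (n : ℕ) (ε₀ L : ℝ) : ℝ :=
  4 * L * (1 + posetWidth X * Real.log (Fintype.card X + 1)) / (ε₀ * n)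

lemma sum_transition_mul_potential_le (hℓ : IsLipschitzLoss ℓ L) (hD : IsDataset D)
    (hL : 0 < L) (hn : 0 < n) (hε₀ : 0 < ε₀) {d : ℕ} {g : X → ℕ} (hg : IsGridMap d g) :
    ∑ g' ∈ gridMaps (d + 1), transition ℓ D ε₀ L d g g' * potential ℓ D (d + 1) g' ≤
      potential ℓ D d g + roundError X n ε₀ L := by
  have hlam : 0 < invTemp n ε₀ L d := by unfold invTemp; positivity
  rw [sum_transition_mul hg.2]
  refine (sum_gibbs_mul_le _ hlam _).trans (add_le_add
    (inf'_potential_refinements_le hℓ hD g d) ?_)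
  calc (1 + Real.log #(refinements g)) / invTemp n ε₀ L d
      ≤ (1 + 2 ^ d * (posetWidth X * Real.log (Fintype.card X + 1))) / invTemp n ε₀ L d := by
        gcongr
        exact log_card_refinements_le hg.2
    _ = 4 * L * ((2 ^ d)⁻¹ + posetWidth X * Real.log (Fintype.card X + 1)) / (ε₀ * n) := by
        unfold invTemp
        field_simp
    _ ≤ roundError X n ε₀ L := by
        unfold roundError
        gcongr
        exact inv_le_one_of_one_le₀ (one_le_pow₀ one_le_two)

variable (ℓ D ε₀ L) in
def expectedPotential (d : ℕ) : ℝ :=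
  ∑ g ∈ gridMaps d, stateDist ℓ D ε₀ L d g * potential ℓ D d g

lemma expectedPotential_zero : expectedPotential ℓ D ε₀ L 0 = optRisk ℓ D := by
  rw [← potential_zero, expectedPotential,
    sum_eq_single_of_mem (fun _ => 0) (mem_gridMaps.2 fun _ => Nat.one_pos)]
  · simp [stateDist]
  · intro g _ hg
    simp [stateDist, hg]

lemma expectedPotential_le (hℓ : IsLipschitzLoss ℓ L) (hD : IsDataset D)
    (hL : 0 < L) (hn : 0 < n) (hε₀ : 0 < ε₀) :
    ∀ T : ℕ, expectedPotential ℓ D ε₀ L T ≤ optRisk ℓ D + T * roundError X n ε₀ L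
  | 0 => by simp [expectedPotential_zero]
  | T + 1 => by
    calc expectedPotential ℓ D ε₀ L (T + 1)
        = ∑ g ∈ gridMaps T, stateDist ℓ D ε₀ L T g * ∑ g' ∈ gridMaps (T + 1),
            transition ℓ D ε₀ L T g g' * potential ℓ D (T + 1) g' := by
          simp only [expectedPotential, stateDist, sum_mul, mul_sum, mul_assoc]
          exact sum_comm
      _ ≤ ∑ g ∈ gridMaps T, stateDist ℓ D ε₀ L T g *
            (potential ℓ D T g + roundError X n ε₀ L) :=
          sum_stateDist_mul_le_sum_stateDist_mul _ fun g hg =>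
            sum_transition_mul_potential_le hℓ hD hL hn hε₀ hg
      _ = expectedPotential ℓ D ε₀ L T + roundError X n ε₀ L := by
          simp only [mul_add, sum_add_distrib, ← sum_mul, sum_stateDist, one_mul,
            expectedPotential]
      _ ≤ optRisk ℓ D + (T + 1 : ℕ) * roundError X n ε₀ L := by
          have := expectedPotential_le hℓ hD hL hn hε₀ T
          push_cast
          linarith

end Utility

section Mechanism

variable {X : Type*} [PartialOrder X] [Fintype X] [DecidableEq X] [DecidableLE X]
  {ℓ : ℝ → ℝ → ℝ} {n : ℕ} {D : Fin n → X × ℝ} {ε₀ L : ℝ}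

variable (ℓ D ε₀ L) in
def mechanism (T : ℕ) : Measure (X → ℝ) :=
  ∑ g ∈ gridMaps T,
    ENNReal.ofReal (stateDist ℓ D ε₀ L T g) • Measure.dirac fun x => dyadic T (g x)

lemma mechanism_apply (T : ℕ) (S : Set (X → ℝ)) :
    mechanism ℓ D ε₀ L T S = ∑ g ∈ gridMaps T,
      ENNReal.ofReal (stateDist ℓ D ε₀ L T g) * Measure.dirac (fun x => dyadic T (g x)) S := by
  simp [mechanism, Measure.coe_finsetSum]

lemma mechanism_eq_one {T : ℕ} {S : Set (X → ℝ)}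
    (hS : ∀ g, IsGridMap T g → (fun x => dyadic T (g x)) ∈ S) : mechanism ℓ D ε₀ L T S = 1 := by
  have hterm : ∀ g ∈ gridMaps T, ENNReal.ofReal (stateDist ℓ D ε₀ L T g) *
      Measure.dirac (fun x => dyadic T (g x)) S = ENNReal.ofReal (stateDist ℓ D ε₀ L T g) := by
    intro g _
    rcases eq_or_ne (stateDist ℓ D ε₀ L T g) 0 with h | h
    · simp [h]
    · rw [Measure.dirac_apply_of_mem (hS g (isGridMap_of_stateDist_ne_zero h)), mul_one]
  rw [mechanism_apply, sum_congr rfl hterm,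
    ← ENNReal.ofReal_sum_of_nonneg fun g _ => stateDist_nonneg T g, sum_stateDist,
    ENNReal.ofReal_one]

lemma isProbabilityMeasure_mechanism (T : ℕ) : IsProbabilityMeasure (mechanism ℓ D ε₀ L T) :=
  ⟨mechanism_eq_one fun _ _ => Set.mem_univ _⟩

lemma mechanism_monotone01 (T : ℕ) : mechanism ℓ D ε₀ L T {f | IsMonotone01 f} = 1 :=
  mechanism_eq_one fun _ hg =>
    ⟨fun _ _ hxy => dyadic_mono T (hg.1 hxy),
      fun x => ⟨dyadic_nonneg _ _, dyadic_le_one (hg.2 x).le⟩⟩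

lemma mechanism_le_exp_mul (hℓ : IsLipschitzLoss ℓ L) (hL : 0 < L) (hn : 0 < n)
    {D' : Fin n → X × ℝ} (hD : IsDataset D) (hD' : IsDataset D') {i : Fin n}
    (hDD' : ∀ j, j ≠ i → D j = D' j) (hε₀ : 0 ≤ ε₀) (T : ℕ) (S : Set (X → ℝ)) :
    mechanism ℓ D ε₀ L T S ≤ ENNReal.ofReal (Real.exp (T * ε₀)) * mechanism ℓ D' ε₀ L T S := by
  rw [mechanism_apply, mechanism_apply, mul_sum]
  refine sum_le_sum fun g _ => ?_
  rw [← mul_assoc, ← ENNReal.ofReal_mul (Real.exp_pos _).le]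
  gcongr
  exact stateDist_le_exp_mul hℓ hL hn hD hD' hDD' hε₀ T g

lemma integral_empRisk_mechanism (T : ℕ) :
    ∫ f, empRisk ℓ f D ∂(mechanism ℓ D ε₀ L T) =
      ∑ g ∈ gridMaps T, stateDist ℓ D ε₀ L T g * empRisk ℓ (fun x => dyadic T (g x)) D := by
  rw [mechanism, integral_finsetSum_measure fun _ _ =>
    (integrable_dirac enorm_lt_top).smul_measure ENNReal.ofReal_ne_top]
  refine sum_congr rfl fun g _ => ?_
  rw [integral_smul_measure, integral_dirac, ENNReal.toReal_ofReal (stateDist_nonneg T g),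
    smul_eq_mul]

lemma integral_empRisk_mechanism_le (hℓ : IsLipschitzLoss ℓ L) (hD : IsDataset D)
    (hL : 0 < L) (hn : 0 < n) (hε₀ : 0 < ε₀) (T : ℕ) :
    ∫ f, empRisk ℓ f D ∂(mechanism ℓ D ε₀ L T) ≤
      optRisk ℓ D + T * roundError X n ε₀ L + L / 2 ^ T := by
  calc ∫ f, empRisk ℓ f D ∂(mechanism ℓ D ε₀ L T)
      ≤ ∑ g ∈ gridMaps T, stateDist ℓ D ε₀ L T g * (potential ℓ D T g + L / 2 ^ T) := by
        rw [integral_empRisk_mechanism]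
        exact sum_stateDist_mul_le_sum_stateDist_mul _ fun g hg => empRisk_le_potential_add hℓ hD hg
    _ = expectedPotential ℓ D ε₀ L T + L / 2 ^ T := by
        simp only [mul_add, sum_add_distrib, ← sum_mul, sum_stateDist, one_mul,
          expectedPotential]
    _ ≤ optRisk ℓ D + T * roundError X n ε₀ L + L / 2 ^ T := by
        gcongr
        exact expectedPotential_le hℓ hD hL hn hε₀ T

end Mechanism

section Rates

/-- `T ≈ log₂ (ε n)` rounds make the final rounding error `L / 2^T` at most `L / (ε n)`. -/
def rounds (t : ℝ) : ℕ := ⌈Real.logb 2 t⌉₊ + 1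

lemma le_two_pow_rounds {t : ℝ} (ht : 0 < t) : t ≤ 2 ^ rounds t := by
  calc t = 2 ^ Real.logb 2 t := (Real.rpow_logb two_pos (by norm_num) ht).symm
    _ ≤ 2 ^ (rounds t : ℝ) := by
        apply Real.rpow_le_rpow_of_exponent_le one_le_two
        unfold rounds; push_cast
        linarith [Nat.le_ceil (Real.logb 2 t)]
    _ = 2 ^ rounds t := Real.rpow_natCast _ _

lemma rounds_le (t : ℝ) : (rounds t : ℝ) ≤ 2 * (1 + |Real.log t|) := by
  unfold rounds
  push_cast
  rcases le_or_gt (Real.logb 2 t) 0 with h | h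
  · rw [Nat.ceil_eq_zero.2 h, Nat.cast_zero]
    linarith [abs_nonneg (Real.log t)]
  · have hlog2 : 1 / 2 < Real.log 2 := by linarith [Real.log_two_gt_d9]
    have hlogb : Real.logb 2 t ≤ 2 * |Real.log t| := by
      rw [Real.logb, div_le_iff₀ (by linarith)]
      nlinarith [le_abs_self (Real.log t), abs_nonneg (Real.log t)]
    linarith [Nat.ceil_lt_add_one h.le]

lemma rounds_sq_le (t : ℝ) : (rounds t : ℝ) ^ 2 ≤ 8 * (1 + Real.log t ^ 2) := by
  have h := rounds_le t
  have h0 : (0 : ℝ) ≤ rounds t := Nat.cast_nonneg _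
  nlinarith [sq_abs (Real.log t), sq_nonneg (|Real.log t| - 1)]

lemma one_add_mul_log_succ_le {w N : ℝ} (hw : 1 ≤ w) (hN : 2 ≤ N) :
    1 + w * Real.log (N + 1) ≤ 4 * (w * Real.log N) := by
  have hlogN : 1 / 2 ≤ Real.log N := by
    linarith [Real.log_two_gt_d9, Real.log_le_log two_pos hN]
  have hsucc : Real.log (N + 1) ≤ 2 * Real.log N := by
    calc Real.log (N + 1) ≤ Real.log (N ^ 2) := Real.log_le_log (by linarith) (by nlinarith)
      _ = 2 * Real.log N := by rw [Real.log_pow]; norm_num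
  nlinarith

lemma four_mul_sq_mul_add_le {L T A B x : ℝ} (hL : 0 ≤ L) (hT : T ^ 2 ≤ 8 * (1 + x ^ 2))
    (hA0 : 0 ≤ A) (hA : 1 + A ≤ 4 * B) :
    4 * L * T ^ 2 * (1 + A) + L ≤ 132 * L * B * (1 + x ^ 2) := by
  have h1 : T ^ 2 * (1 + A) ≤ 8 * (1 + x ^ 2) * (4 * B) :=
    mul_le_mul hT hA (by linarith) (by positivity)
  have h2 : 1 ≤ 4 * B * (1 + x ^ 2) := by nlinarith [sq_nonneg x]
  nlinarith [mul_le_mul_of_nonneg_left h1 hL, mul_le_mul_of_nonneg_left h2 hL]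

end Rates

section Mechanisms

lemma isDP_const {I Ω : Type*} [MeasurableSpace Ω] (Neighbor : I → I → Prop) (μ : Measure Ω)
    {ε : ℝ} (hε : 0 ≤ ε) : IsDP Neighbor (fun _ => μ) ε 0 := by
  intro _ _ _ S _
  rw [ENNReal.ofReal_zero, add_zero]
  refine le_mul_of_one_le_left (by simp) ?_
  rw [← ENNReal.ofReal_one]
  exact ENNReal.ofReal_le_ofReal (Real.one_le_exp hε)

/-- With `L = 0` the loss ignores the prediction, so the constant output `0` is optimal. -/
lemma exists_isIsoRegAlg_of_lipschitz_zero {X : Type*} [PartialOrder X] [Countable X]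
    {ℓ : ℝ → ℝ → ℝ} (hℓ : IsLipschitzLoss ℓ 0) (n : ℕ) {ε : ℝ} (hε : 0 ≤ ε) :
    ∃ M : (Fin n → X × ℝ) → Measure (X → ℝ), IsIsoRegAlg M ∧ IsDP NeighborDS M ε 0 ∧
      ∀ D, IsDataset D → (∫ f, empRisk ℓ f D ∂(M D)) - optRisk ℓ D ≤ 0 := by
  have hzero : IsMonotone01 (fun _ : X => (0 : ℝ)) := ⟨monotone_const, fun _ => by norm_num⟩
  refine ⟨fun _ => Measure.dirac 0, fun _ _ => ⟨inferInstance, Measure.dirac_apply_of_mem hzero⟩,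
    isDP_const _ _ hε, fun D hD => ?_⟩
  have : Nonempty {f : X → ℝ // IsMonotone01 f} := ⟨⟨_, hzero⟩⟩
  rw [integral_dirac, sub_nonpos]
  refine le_ciInf fun f => le_of_eq ?_
  unfold empRisk
  congr 1
  refine sum_congr rfl fun i _ => ?_
  have h := hℓ.2 0 (f.1 (D i).1) (D i).2 (by norm_num) (f.2.2 _) (hD i)
  rw [zero_mul] at h
  exact sub_eq_zero.1 (abs_nonpos_iff.1 h)

variable {X : Type*} [PartialOrder X] [Fintype X] [DecidableEq X] [DecidableLE X]
  {ℓ : ℝ → ℝ → ℝ} {n : ℕ} {L : ℝ}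

lemma isIsoRegAlg_mechanism (ε₀ L : ℝ) (T : ℕ) :
    IsIsoRegAlg fun D : Fin n → X × ℝ => mechanism ℓ D ε₀ L T :=
  fun _ _ => ⟨isProbabilityMeasure_mechanism T, mechanism_monotone01 T⟩

lemma isDP_mechanism (hℓ : IsLipschitzLoss ℓ L) (hL : 0 < L) (hn : 0 < n) {ε : ℝ} (hε : 0 ≤ ε)
    {T : ℕ} (hT : 0 < T) :
    IsDP NeighborDS (fun D : Fin n → X × ℝ => mechanism ℓ D (ε / T) L T) ε 0 := by
  rintro D D' ⟨hD, hD', i, hDD'⟩ S -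
  have := mechanism_le_exp_mul (ε₀ := ε / T) hℓ hL hn hD hD' hDD' (by positivity) T S
  rw [mul_div_cancel₀ _ (by positivity)] at this
  simpa using this

lemma integral_empRisk_mechanism_rounds_sub_le (hcard : 2 ≤ Fintype.card X)
    (hℓ : IsLipschitzLoss ℓ L) {D : Fin n → X × ℝ} (hD : IsDataset D) (hL : 0 < L)
    (hn : 0 < n) {ε : ℝ} (hε : 0 < ε) :
    (∫ f, empRisk ℓ f D ∂(mechanism ℓ D (ε / rounds (ε * n)) L (rounds (ε * n)))) -
        optRisk ℓ D ≤
      132 * L * posetWidth X * Real.log (Fintype.card X) * (1 + Real.log (ε * n) ^ 2) /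
        (ε * n) := by
  set T := rounds (ε * n)
  set A := (posetWidth X : ℝ) * Real.log (Fintype.card X + 1)
  have ht : 0 < ε * n := by positivity
  have hT : (T : ℝ) ≠ 0 := Nat.cast_ne_zero.2 (Nat.succ_ne_zero _)
  have : Nonempty X := Fintype.card_pos_iff.1 (by omega)
  have hA := one_add_mul_log_succ_le (w := posetWidth X) (N := Fintype.card X)
    (by exact_mod_cast one_le_posetWidth) (by exact_mod_cast hcard)
  have hA0 : 0 ≤ A :=
    mul_nonneg (Nat.cast_nonneg _) (Real.log_nonneg (le_add_of_nonneg_left (Nat.cast_nonneg _)))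
  have hrisk := integral_empRisk_mechanism_le (ε₀ := ε / T) hℓ hD hL hn (by positivity) T
  have hround : (T : ℝ) * roundError X n (ε / T) L = 4 * L * T ^ 2 * (1 + A) / (ε * n) := by
    simp only [roundError, A]; field_simp
  have hdiv : L / 2 ^ T ≤ L / (ε * n) := by gcongr; exact le_two_pow_rounds ht
  calc _ ≤ (4 * L * T ^ 2 * (1 + A) + L) / (ε * n) := by
        rw [add_div]; linarith
    _ ≤ _ := by
        rw [mul_assoc _ (posetWidth X : ℝ)]
        gcongr
        exact four_mul_sq_mul_add_le hL.le (rounds_sq_le _) hA0 hA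

end Mechanisms

end PrivateIsotonic

open PrivateIsotonic in
/-- **Theorem 1 (Upper Bound for General Posets).** There is a universal constant `C > 0`
such that for every finite poset `X` with at least 2 elements, every `L`-Lipschitz loss `ℓ`,
every `n ≥ 1` and `ε ∈ (0,1]`, there is an `ε`-DP isotonic-regression mechanism whose
expected excess empirical risk on every dataset is at most
`C · L · width(X) · log|X| · (1 + log²(εn)) / (εn)`. -/
theorem dp_isotonic_regression_general_poset_upper_bound :
    ∃ C : ℝ, 0 < C ∧
      ∀ (X : Type) [Fintype X] [PartialOrder X],
        2 ≤ Fintype.card X →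
        ∀ (ℓ : ℝ → ℝ → ℝ) (L : ℝ), IsLipschitzLoss ℓ L →
        ∀ n : ℕ, 1 ≤ n →
        ∀ ε : ℝ, ε ∈ Set.Ioc (0 : ℝ) 1 →
        ∃ M : (Fin n → X × ℝ) → Measure (X → ℝ),
          IsIsoRegAlg M ∧
          IsDP NeighborDS M ε 0 ∧
          ∀ D : Fin n → X × ℝ, IsDataset D →
            (∫ f, empRisk ℓ f D ∂(M D)) - optRisk ℓ D ≤
              C * L * (posetWidth X : ℝ) * Real.log (Fintype.card X) *
                (1 + Real.log (ε * n) ^ 2) / (ε * n) := by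
  refine ⟨132, by norm_num, fun X _ _ hcard ℓ L hℓ n hn ε hε => ?_⟩
  classical
  rcases hℓ.lipschitz_nonneg.eq_or_lt with rfl | hL
  · obtain ⟨M, hM, hDP, hrisk⟩ := exists_isIsoRegAlg_of_lipschitz_zero (X := X) hℓ n hε.1.le
    exact ⟨M, hM, hDP, fun D hD => (hrisk D hD).trans_eq (by simp)⟩
  exact ⟨fun D => mechanism ℓ D (ε / rounds (ε * n)) L (rounds (ε * n)),
    isIsoRegAlg_mechanism _ _ _, isDP_mechanism hℓ hL hn hε.1.le (Nat.succ_pos _),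
    fun D hD => integral_empRisk_mechanism_rounds_sub_le hcard hℓ hD hL hn hε.1⟩
end
end

section
/- There is a universal constant C > 0 such that the following holds. Let X = {1,...,m} with the usual total order, m ≥ 2, let ℓ : [0,1]×[0,1] → ℝ≥0 be an L-Lipschitz loss function, let n ≥ 1 and ε ∈ (0,1]. Then there exists a randomized algorithm M mapping each dataset D ∈ (X×[0,1])^n to a probability distribution over monotone functions f : X → [0,1], such that M is ε-differentially private and for every dataset D, the expected excess empirical risk E_{f∼M(D)}[L_ℓ(f;D)] − min_{g monotone, g:X→[0,1]} L_ℓ(g;D) is at most C · L · (log m) · (1 + log²(εn)) / (εn). -/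
open MeasureTheory

noncomputable section

/-!
The mechanism fits a monotone step function by a binary recursion of depth `T ≈ log₂ (ε n)`.
A node owns a window `[s, e)` of features and a range `[a, a + w]` of values. It draws a cut `t`
of the window from the exponential mechanism; then `[s, t)` is fitted recursively with values
in `[a, a + w/2]` and `[t, e)` with values in `[a + w/2, a + w]`. The score of a cut is the
optimal cost of the rest of the recursion (`benchmark`), and this optimum is at most the cost of
any monotone comparator: cut where the comparator crosses `a + w/2`.

Privacy: changing one data point shifts all cut scores of a node by the same amount up to
`O(L w)`, and the point lies in one window per level, so each level costs `O(ε / T)`.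
Utility: a node loses `O(w T log m / ε)` to the exponential mechanism; the widths on a level add
up to `1`, so the total is `O(T² log m / ε)`, and the leaves add `L 2⁻ᵀ ≤ L / (ε n)` per point.
-/

lemma IsLipschitzLoss.const_nonneg {ℓ : ℝ → ℝ → ℝ} {L : ℝ} (hℓ : IsLipschitzLoss ℓ L) :
    0 ≤ L := by
  simpa using (abs_nonneg _).trans (hℓ.2 0 1 0 (by simp) (by simp) (by simp))

instance {X : Type*} [PartialOrder X] : Nonempty {g : X → ℝ // IsMonotone01 g} :=
  ⟨⟨fun _ => 0, monotone_const, fun _ => by simp⟩⟩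

namespace IsotonicDP

open Finset Real

section ExponentialMechanism

variable {ι : Type*} [Fintype ι]

def expMech (β : ℝ) (c : ι → ℝ) (i : ι) : ℝ :=
  exp (-β * c i) / ∑ j, exp (-β * c j)

variable [Nonempty ι]

lemma sum_exp_pos (β : ℝ) (c : ι → ℝ) : 0 < ∑ j, exp (-β * c j) :=
  sum_pos (fun _ _ => exp_pos _) univ_nonempty

lemma expMech_pos (β : ℝ) (c : ι → ℝ) (i : ι) : 0 < expMech β c i :=
  div_pos (exp_pos _) (sum_exp_pos β c)

lemma sum_expMech (β : ℝ) (c : ι → ℝ) : ∑ i, expMech β c i = 1 := by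
  simp only [expMech, ← sum_div, div_self (sum_exp_pos β c).ne']

/-- Gibbs' inequality `∑ p log (N p) ≥ 0` against the uniform distribution, rewritten
through `log (expMech β c i) = -β c i - log Z`. -/
lemma sum_expMech_mul_le {β : ℝ} (hβ : 0 < β) (c : ι → ℝ) (i₀ : ι) :
    ∑ i, expMech β c i * c i ≤ c i₀ + log (Fintype.card ι) / β := by
  set Z := ∑ j, exp (-β * c j)
  have hN : 0 < (Fintype.card ι : ℝ) := Nat.cast_pos.2 Fintype.card_pos
  have hZ : 0 < Z := sum_exp_pos β c
  have gibbs : ∀ i, expMech β c i - (Fintype.card ι : ℝ)⁻¹ ≤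
      expMech β c i * (log (Fintype.card ι) - log Z) - β * (expMech β c i * c i) := by
    intro i
    have hp := expMech_pos β c i
    have h := one_sub_inv_le_log_of_pos (mul_pos hN hp)
    rw [log_mul hN.ne' hp.ne', expMech, log_div (exp_pos _).ne' hZ.ne', log_exp,
      ← expMech] at h
    have h' := mul_le_mul_of_nonneg_left h hp.le
    rw [mul_sub, mul_one, mul_inv, ← mul_assoc, mul_comm _ (Fintype.card ι : ℝ)⁻¹, mul_assoc,
      mul_inv_cancel₀ hp.ne', mul_one] at h'
    linear_combination h'
  have hsum := sum_le_sum fun i (_ : i ∈ univ) => gibbs i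
  simp only [sum_sub_distrib, ← sum_mul, ← mul_sum, sum_expMech, sum_const, card_univ,
    nsmul_eq_mul, mul_inv_cancel₀ hN.ne', one_mul] at hsum
  have hlogZ : -β * c i₀ ≤ log Z := by
    rw [← log_exp (-β * c i₀)]
    exact log_le_log (exp_pos _)
      (single_le_sum (fun j _ => (exp_pos (-β * c j)).le) (mem_univ i₀))
  rw [← sub_le_iff_le_add', le_div_iff₀ hβ]
  linear_combination hsum + hlogZ

/-- The common shift `K` of the scores cancels in the normalization. -/
lemma expMech_le_exp_mul {β K S : ℝ} (hβ : 0 ≤ β) {c c' : ι → ℝ}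
    (h : ∀ i, |c i - c' i - K| ≤ S) (i : ι) :
    expMech β c i ≤ exp (2 * β * S) * expMech β c' i := by
  have hnum : exp (-β * c i) ≤ exp (β * (S - K)) * exp (-β * c' i) := by
    rw [← exp_add, exp_le_exp]
    nlinarith [(abs_le.1 (h i)).1]
  have hden : exp (-β * (K + S)) * ∑ j, exp (-β * c' j) ≤ ∑ j, exp (-β * c j) := by
    rw [mul_sum]
    refine sum_le_sum fun j _ => ?_
    rw [← exp_add, exp_le_exp]
    nlinarith [(abs_le.1 (h j)).2]
  calc expMech β c i
      ≤ exp (β * (S - K)) * exp (-β * c' i) / (exp (-β * (K + S)) * ∑ j, exp (-β * c' j)) :=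
        div_le_div₀ (by positivity) hnum (by positivity [sum_exp_pos β c']) hden
    _ = exp (2 * β * S) * expMech β c' i := by
        rw [expMech, mul_div_mul_comm, ← exp_sub]
        ring_nf

end ExponentialMechanism

section DiracMixture

variable {ι α : Type*} [Fintype ι] [MeasurableSpace α]

def diracMixture (p : ι → ℝ) (g : ι → α) : Measure α :=
  ∑ i, ENNReal.ofReal (p i) • Measure.dirac (g i)

lemma diracMixture_apply (p : ι → ℝ) (g : ι → α) (S : Set α) :
    diracMixture p g S = ∑ i, ENNReal.ofReal (p i) * Measure.dirac (g i) S := by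
  simp only [diracMixture, Measure.coe_finsetSum, Finset.sum_apply, Measure.smul_apply,
    smul_eq_mul]

lemma diracMixture_eq_one {p : ι → ℝ} (hp : ∀ i, 0 ≤ p i) (hp1 : ∑ i, p i = 1) {g : ι → α}
    {S : Set α} (hS : ∀ i, g i ∈ S) : diracMixture p g S = 1 := by
  simp only [diracMixture_apply, Measure.dirac_apply_of_mem (hS _), mul_one]
  rw [← ENNReal.ofReal_sum_of_nonneg fun i _ => hp i, hp1, ENNReal.ofReal_one]

lemma diracMixture_le_mul {p p' : ι → ℝ} {r : ℝ} (hr : 0 ≤ r) (h : ∀ i, p i ≤ r * p' i)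
    (g : ι → α) (S : Set α) : diracMixture p g S ≤ ENNReal.ofReal r * diracMixture p' g S := by
  simp only [diracMixture_apply, mul_sum, ← mul_assoc]
  gcongr with i
  exact (ENNReal.ofReal_le_ofReal (h i)).trans_eq (ENNReal.ofReal_mul hr)

lemma integral_diracMixture [MeasurableSingletonClass α] {p : ι → ℝ} (hp : ∀ i, 0 ≤ p i)
    (g : ι → α) (F : α → ℝ) : ∫ x, F x ∂(diracMixture p g) = ∑ i, p i * F (g i) := by
  rw [diracMixture, integral_finsetSum_measure fun i _ =>
    (integrable_dirac enorm_lt_top).smul_measure ENNReal.ofReal_ne_top]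
  simp only [integral_smul_measure, integral_dirac, ENNReal.toReal_ofReal (hp _), smul_eq_mul]

end DiracMixture

section Windows

variable {m n : ℕ}

def windowInd (s e x : ℕ) : ℝ := if x ∈ Set.Ico s e then 1 else 0

lemma windowInd_nonneg (s e x : ℕ) : 0 ≤ windowInd s e x := by
  unfold windowInd; split_ifs <;> norm_num

lemma windowInd_le_one (s e x : ℕ) : windowInd s e x ≤ 1 := by
  unfold windowInd; split_ifs <;> norm_num

lemma windowInd_split {s t e : ℕ} (hst : s ≤ t) (hte : t ≤ e) (x : ℕ) :
    windowInd s e x = windowInd s t x + windowInd t e x := by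
  simp only [windowInd, Set.mem_Ico]
  split_ifs <;> first | omega | norm_num

def windowSum (D : Fin n → Fin m × ℝ) (s e : ℕ) (F : Fin m × ℝ → ℝ) : ℝ :=
  ∑ i, windowInd s e (D i).1 * F (D i)

lemma windowSum_split (D : Fin n → Fin m × ℝ) {s t e : ℕ} (hst : s ≤ t) (hte : t ≤ e)
    (F : Fin m × ℝ → ℝ) : windowSum D s e F = windowSum D s t F + windowSum D t e F := by
  simp only [windowSum, windowInd_split hst hte, add_mul, sum_add_distrib]

lemma windowSum_mono (D : Fin n → Fin m × ℝ) {s e : ℕ} {F G : Fin m × ℝ → ℝ}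
    (h : ∀ i, ((D i).1 : ℕ) ∈ Set.Ico s e → F (D i) ≤ G (D i)) :
    windowSum D s e F ≤ windowSum D s e G := by
  refine sum_le_sum fun i _ => ?_
  by_cases hi : ((D i).1 : ℕ) ∈ Set.Ico s e <;> simp [windowInd, hi, h]

lemma windowSum_congr (D : Fin n → Fin m × ℝ) {s e : ℕ} {F G : Fin m × ℝ → ℝ}
    (h : ∀ i, ((D i).1 : ℕ) ∈ Set.Ico s e → F (D i) = G (D i)) :
    windowSum D s e F = windowSum D s e G :=
  (windowSum_mono D fun i hi => (h i hi).le).antisymm (windowSum_mono D fun i hi => (h i hi).ge)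

lemma windowSum_add (D : Fin n → Fin m × ℝ) (s e : ℕ) (F G : Fin m × ℝ → ℝ) :
    windowSum D s e (F + G) = windowSum D s e F + windowSum D s e G := by
  simp only [windowSum, Pi.add_apply, mul_add, sum_add_distrib]

lemma windowSum_univ (D : Fin n → Fin m × ℝ) (F : Fin m × ℝ → ℝ) :
    windowSum D 0 m F = ∑ i, F (D i) := by
  simp [windowSum, windowInd]

lemma windowSum_sub_windowSum {D D' : Fin n → Fin m × ℝ} {i₀ : Fin n}
    (hoff : ∀ j, j ≠ i₀ → D j = D' j) (s e : ℕ) (F : Fin m × ℝ → ℝ) :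
    windowSum D s e F - windowSum D' s e F =
      windowInd s e (D i₀).1 * F (D i₀) - windowInd s e (D' i₀).1 * F (D' i₀) := by
  rw [windowSum, windowSum, ← sum_sub_distrib, sum_eq_single i₀ (fun j _ hj => by
    rw [hoff j hj, sub_self]) (fun h => absurd (mem_univ i₀) h)]

def windowCost (ℓ : ℝ → ℝ → ℝ) (D : Fin n → Fin m × ℝ) (f : ℕ → ℝ) (s e : ℕ) : ℝ :=
  windowSum D s e fun p => ℓ (f p.1) p.2

end Windows

section BestLoss

variable {ℓ : ℝ → ℝ → ℝ} {L a w y : ℝ}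

def bestLoss (ℓ : ℝ → ℝ → ℝ) (a w y : ℝ) : ℝ :=
  sInf ((fun v => ℓ v y) '' Set.Icc a (a + w))

lemma bestLoss_le (hℓ : IsLipschitzLoss ℓ L) (ha : 0 ≤ a) (hb : a + w ≤ 1)
    (hy : y ∈ Set.Icc (0 : ℝ) 1) {v : ℝ} (hv : v ∈ Set.Icc a (a + w)) :
    bestLoss ℓ a w y ≤ ℓ v y := by
  refine csInf_le ⟨0, ?_⟩ ⟨v, hv, rfl⟩
  rintro _ ⟨v', hv', rfl⟩
  exact hℓ.1 v' y ⟨ha.trans hv'.1, hv'.2.trans hb⟩ hy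

lemma abs_bestLoss_sub_le (hℓ : IsLipschitzLoss ℓ L) (ha : 0 ≤ a) (hw : 0 ≤ w)
    (hb : a + w ≤ 1) (hy : y ∈ Set.Icc (0 : ℝ) 1) {v₀ d : ℝ} (hv₀ : v₀ ∈ Set.Icc (0 : ℝ) 1)
    (hd : ∀ v ∈ Set.Icc a (a + w), |v - v₀| ≤ d) :
    |bestLoss ℓ a w y - ℓ v₀ y| ≤ L * d := by
  have hlip : ∀ v ∈ Set.Icc a (a + w), |ℓ v y - ℓ v₀ y| ≤ L * d := fun v hv =>
    (hℓ.2 v v₀ y ⟨ha.trans hv.1, hv.2.trans hb⟩ hv₀ hy).trans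
      (mul_le_mul_of_nonneg_left (hd v hv) hℓ.const_nonneg)
  have ha_mem : a ∈ Set.Icc a (a + w) := ⟨le_rfl, by linarith⟩
  rw [abs_le]
  constructor
  · refine le_sub_iff_add_le.2 (le_csInf ⟨_, a, ha_mem, rfl⟩ ?_)
    rintro _ ⟨v, hv, rfl⟩
    linarith [(abs_le.1 (hlip v hv)).1]
  · linarith [bestLoss_le hℓ ha hb hy ha_mem, (abs_le.1 (hlip a ha_mem)).2]

end BestLoss

/-- A transcript of depth `T` records a cut point in `{0, …, m}` at every node of a complete
binary tree of depth `T`. -/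
def Transcript (m : ℕ) : ℕ → Type
  | 0 => Unit
  | T + 1 => Fin (m + 1) × Transcript m T × Transcript m T

instance Transcript.instFintype (m : ℕ) : (T : ℕ) → Fintype (Transcript m T)
  | 0 => inferInstanceAs (Fintype Unit)
  | T + 1 =>
    letI := Transcript.instFintype m T
    inferInstanceAs (Fintype (Fin (m + 1) × Transcript m T × Transcript m T))

lemma Transcript.sum_zero {m : ℕ} (f : Transcript m 0 → ℝ) : ∑ τ, f τ = f () :=
  Fintype.sum_unique (ι := Unit) f

lemma Transcript.sum_succ {m T : ℕ} (f : Transcript m (T + 1) → ℝ) :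
    ∑ τ, f τ = ∑ t : Fin (m + 1), ∑ τl : Transcript m T, ∑ τr : Transcript m T, f (t, τl, τr) :=
  (Fintype.sum_prod_type (f := fun τ : Fin (m + 1) × Transcript m T × Transcript m T => f τ)).trans
    (sum_congr rfl fun _ _ => Fintype.sum_prod_type _)

def clip (s e t : ℕ) : ℕ := min (max t s) e

lemma le_clip {s e : ℕ} (hse : s ≤ e) (t : ℕ) : s ≤ clip s e t := by
  unfold clip; omega

lemma clip_le (s e t : ℕ) : clip s e t ≤ e := min_le_right _ _

lemma clip_of_mem {s e t : ℕ} (hst : s ≤ t) (hte : t ≤ e) : clip s e t = t := by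
  unfold clip; omega

section Tree

variable {m n : ℕ} (ℓ : ℝ → ℝ → ℝ) (D : Fin n → Fin m × ℝ)

/-- `benchmark ℓ D T s e a w` is the least loss on the window `[s, e)` of a prediction built
by `T` rounds of cutting both the window and the value range `[a, a + w]` into two halves,
each final piece predicting optimally within its value range. -/
def benchmark : ℕ → ℕ → ℕ → ℝ → ℝ → ℝ
  | 0, s, e, a, w => windowSum D s e fun p => bestLoss ℓ a w p.2
  | T + 1, s, e, a, w => univ.inf' univ_nonempty fun t : Fin (m + 1) =>
      benchmark T s (clip s e t) a (w / 2) + benchmark T (clip s e t) e (a + w / 2) (w / 2)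

def cutScore (T s e : ℕ) (a w : ℝ) (t : Fin (m + 1)) : ℝ :=
  benchmark ℓ D T s (clip s e t) a (w / 2) + benchmark ℓ D T (clip s e t) e (a + w / 2) (w / 2)

lemma benchmark_succ (T s e : ℕ) (a w : ℝ) :
    benchmark ℓ D (T + 1) s e a w = univ.inf' univ_nonempty (cutScore ℓ D T s e a w) :=
  rfl

/-- A data point moves the cut scores of a node with value range of width `w` by `O(L w)`,
hence the inverse temperature `β / w`. -/
def cutProb (β : ℝ) (T s e : ℕ) (a w : ℝ) (t : Fin (m + 1)) : ℝ :=
  expMech (β / w) (cutScore ℓ D T s e a w) t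

def transcriptProb (β : ℝ) : (T : ℕ) → Transcript m T → ℕ → ℕ → ℝ → ℝ → ℝ
  | 0, _, _, _, _, _ => 1
  | T + 1, (t, τl, τr), s, e, a, w =>
    cutProb ℓ D β T s e a w t * transcriptProb β T τl s (clip s e t) a (w / 2) *
      transcriptProb β T τr (clip s e t) e (a + w / 2) (w / 2)

end Tree

def decode {m : ℕ} : (T : ℕ) → Transcript m T → ℕ → ℕ → ℝ → ℝ → ℕ → ℝ
  | 0, _, _, _, a, w, _ => a + w / 2
  | T + 1, (t, τl, τr), s, e, a, w, x =>
    if x < clip s e t then decode T τl s (clip s e t) a (w / 2) x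
    else decode T τr (clip s e t) e (a + w / 2) (w / 2) x

section TranscriptLemmas

variable {m n : ℕ}

lemma decode_mem : ∀ (T : ℕ) (τ : Transcript m T) (s e : ℕ) {a w : ℝ}, 0 ≤ w → ∀ x,
    decode T τ s e a w x ∈ Set.Icc a (a + w)
  | 0, _, _, _, a, w, hw, _ => ⟨by simp only [decode]; linarith, by simp only [decode]; linarith⟩
  | T + 1, (t, τl, τr), s, e, a, w, hw, x => by
    have hl := decode_mem T τl s (clip s e t) (a := a) (w := w / 2) (by linarith) x
    have hr := decode_mem T τr (clip s e t) e (a := a + w / 2) (w := w / 2) (by linarith) x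
    simp only [decode]
    split_ifs
    · exact ⟨hl.1, by linarith [hl.2]⟩
    · exact ⟨by linarith [hr.1], by linarith [hr.2]⟩

lemma decode_mono : ∀ (T : ℕ) (τ : Transcript m T) (s e : ℕ) {a w : ℝ}, 0 ≤ w →
    Monotone (decode T τ s e a w)
  | 0, _, _, _, _, _, _ => fun _ _ _ => le_rfl
  | T + 1, (t, τl, τr), s, e, a, w, hw => by
    intro x x' hxx'
    have hl := decode_mono T τl s (clip s e t) (a := a) (w := w / 2) (by linarith)
    have hr := decode_mono T τr (clip s e t) e (a := a + w / 2) (w := w / 2) (by linarith)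
    simp only [decode]
    split_ifs with hx hx'
    · exact hl hxx'
    · exact (decode_mem T τl _ _ (by linarith) x).2.trans
        (decode_mem T τr _ _ (by linarith) x').1
    · omega
    · exact hr hxx'

variable (ℓ : ℝ → ℝ → ℝ) (D : Fin n → Fin m × ℝ) (β : ℝ)

lemma transcriptProb_nonneg :
    ∀ (T : ℕ) (τ : Transcript m T) (s e : ℕ) (a w : ℝ), 0 ≤ transcriptProb ℓ D β T τ s e a w
  | 0, _, _, _, _, _ => zero_le_one
  | T + 1, (t, τl, τr), s, e, a, w => by
    have := expMech_pos (β / w) (cutScore ℓ D T s e a w) t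
    have := transcriptProb_nonneg T τl s (clip s e t) a (w / 2)
    have := transcriptProb_nonneg T τr (clip s e t) e (a + w / 2) (w / 2)
    simp only [transcriptProb, cutProb]
    positivity

lemma sum_transcriptProb :
    ∀ (T s e : ℕ) (a w : ℝ), ∑ τ : Transcript m T, transcriptProb ℓ D β T τ s e a w = 1
  | 0, _, _, _, _ => Transcript.sum_zero _
  | T + 1, s, e, a, w => by
    simp only [Transcript.sum_succ, transcriptProb, mul_assoc, ← mul_sum,
      sum_transcriptProb T, mul_one]
    exact sum_expMech _ _

end TranscriptLemmas

lemma abs_add_sub_add_sub_add_le {x₁ x₂ y₁ y₂ k₁ k₂ r₁ r₂ : ℝ} (h₁ : |x₁ - y₁ - k₁| ≤ r₁)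
    (h₂ : |x₂ - y₂ - k₂| ≤ r₂) : |x₁ + x₂ - (y₁ + y₂) - (k₁ + k₂)| ≤ r₁ + r₂ :=
  calc |x₁ + x₂ - (y₁ + y₂) - (k₁ + k₂)| = |(x₁ - y₁ - k₁) + (x₂ - y₂ - k₂)| := by ring_nf
    _ ≤ r₁ + r₂ := (abs_add_le _ _).trans (add_le_add h₁ h₂)

lemma abs_inf'_sub_inf'_sub_le {ι : Type*} {s : Finset ι} (hs : s.Nonempty) {f g : ι → ℝ}
    {K S : ℝ} (h : ∀ i ∈ s, |f i - g i - K| ≤ S) : |s.inf' hs f - s.inf' hs g - K| ≤ S := by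
  obtain ⟨i, hi, hfi⟩ := exists_mem_eq_inf' hs f
  obtain ⟨j, hj, hgj⟩ := exists_mem_eq_inf' hs g
  have := inf'_le f hj
  have := inf'_le g hi
  have := abs_le.1 (h i hi)
  have := abs_le.1 (h j hj)
  rw [abs_le]
  constructor <;> linarith

section Privacy

variable {m n : ℕ} {ℓ : ℝ → ℝ → ℝ} {L : ℝ} {D D' : Fin n → Fin m × ℝ} {i₀ : Fin n}

/-- The shift does not depend on the cuts, as `expMech_le_exp_mul` requires. -/
lemma abs_benchmark_sub_sub_le (hℓ : IsLipschitzLoss ℓ L) (hD : IsDataset D)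
    (hD' : IsDataset D') (hoff : ∀ j, j ≠ i₀ → D j = D' j) {v₀ d : ℝ}
    (hv₀ : v₀ ∈ Set.Icc (0 : ℝ) 1) :
    ∀ (T : ℕ) {s e : ℕ}, s ≤ e → ∀ {a w : ℝ}, 0 ≤ a → 0 ≤ w → a + w ≤ 1 →
      (∀ v ∈ Set.Icc a (a + w), |v - v₀| ≤ d) →
      |benchmark ℓ D T s e a w - benchmark ℓ D' T s e a w -
        (windowInd s e (D i₀).1 * ℓ v₀ (D i₀).2 - windowInd s e (D' i₀).1 * ℓ v₀ (D' i₀).2)| ≤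
        (windowInd s e (D i₀).1 + windowInd s e (D' i₀).1) * (L * d)
  | 0, s, e, _, a, w, ha, hw, hb, hd => by
    have hpoint : ∀ p : Fin m × ℝ, p.2 ∈ Set.Icc (0 : ℝ) 1 →
        |windowInd s e p.1 * bestLoss ℓ a w p.2 - windowInd s e p.1 * ℓ v₀ p.2| ≤
          windowInd s e p.1 * (L * d) := fun p hp => by
      rw [← mul_sub, abs_mul, abs_of_nonneg (windowInd_nonneg _ _ _)]
      exact mul_le_mul_of_nonneg_left (abs_bestLoss_sub_le hℓ ha hw hb hp hv₀ hd)
        (windowInd_nonneg _ _ _)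
    rw [benchmark, benchmark, windowSum_sub_windowSum hoff, add_mul]
    calc _ = |(windowInd s e (D i₀).1 * bestLoss ℓ a w (D i₀).2 -
            windowInd s e (D i₀).1 * ℓ v₀ (D i₀).2) -
          (windowInd s e (D' i₀).1 * bestLoss ℓ a w (D' i₀).2 -
            windowInd s e (D' i₀).1 * ℓ v₀ (D' i₀).2)| := by ring_nf
      _ ≤ _ := (abs_sub _ _).trans (add_le_add (hpoint _ (hD i₀)) (hpoint _ (hD' i₀)))
  | T + 1, s, e, hse, a, w, ha, hw, hb, hd => by
    rw [benchmark_succ, benchmark_succ]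
    refine abs_inf'_sub_inf'_sub_le _ fun t _ => ?_
    have hl := abs_benchmark_sub_sub_le hℓ hD hD' hoff hv₀ T (le_clip hse t) ha
      (w := w / 2) (by linarith) (by linarith) fun v hv => hd v ⟨hv.1, by linarith [hv.2]⟩
    have hr := abs_benchmark_sub_sub_le hℓ hD hD' hoff hv₀ T (clip_le s e t) (a := a + w / 2)
      (w := w / 2) (by linarith) (by linarith) (by linarith)
      fun v hv => hd v ⟨by linarith [hv.1], by linarith [hv.2]⟩
    rw [cutScore, cutScore, windowInd_split (le_clip hse t) (clip_le s e t) (D i₀).1,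
      windowInd_split (le_clip hse t) (clip_le s e t) (D' i₀).1]
    convert abs_add_sub_add_sub_add_le hl hr using 2 <;> ring

lemma abs_cutScore_sub_sub_le (hℓ : IsLipschitzLoss ℓ L) (hD : IsDataset D)
    (hD' : IsDataset D') (hoff : ∀ j, j ≠ i₀ → D j = D' j) (T : ℕ) {s e : ℕ} (hse : s ≤ e)
    {a w : ℝ} (ha : 0 ≤ a) (hw : 0 ≤ w) (hb : a + w ≤ 1) (t : Fin (m + 1)) :
    |cutScore ℓ D T s e a w t - cutScore ℓ D' T s e a w t -
      (windowInd s e (D i₀).1 * ℓ a (D i₀).2 - windowInd s e (D' i₀).1 * ℓ a (D' i₀).2)| ≤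
      (windowInd s e (D i₀).1 + windowInd s e (D' i₀).1) * (L * w) := by
  have hl := abs_benchmark_sub_sub_le hℓ hD hD' hoff (d := w) ⟨ha, by linarith⟩ T
    (le_clip hse t) ha (w := w / 2) (by linarith) (by linarith) fun v hv => by
      rw [abs_le]; constructor <;> linarith [hv.1, hv.2]
  have hr := abs_benchmark_sub_sub_le hℓ hD hD' hoff (d := w) ⟨ha, by linarith⟩ T (clip_le s e t)
    (a := a + w / 2) (w := w / 2) (by linarith) (by linarith) (by linarith) fun v hv => by
      rw [abs_le]; constructor <;> linarith [hv.1, hv.2]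
  rw [cutScore, cutScore, windowInd_split (le_clip hse t) (clip_le s e t) (D i₀).1,
    windowInd_split (le_clip hse t) (clip_le s e t) (D' i₀).1]
  convert abs_add_sub_add_sub_add_le hl hr using 2 <;> ring

lemma cutProb_le (hℓ : IsLipschitzLoss ℓ L) (hD : IsDataset D) (hD' : IsDataset D')
    (hoff : ∀ j, j ≠ i₀ → D j = D' j) {β : ℝ} (hβ : 0 ≤ β) (T : ℕ) {s e : ℕ} (hse : s ≤ e)
    {a w : ℝ} (ha : 0 ≤ a) (hw : 0 < w) (hb : a + w ≤ 1) (t : Fin (m + 1)) :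
    cutProb ℓ D β T s e a w t ≤
      exp (2 * β * L * (windowInd s e (D i₀).1 + windowInd s e (D' i₀).1)) *
        cutProb ℓ D' β T s e a w t := by
  have h := expMech_le_exp_mul (div_nonneg hβ hw.le)
    (abs_cutScore_sub_sub_le hℓ hD hD' hoff T hse ha hw.le hb) t
  rwa [show 2 * (β / w) * ((windowInd s e (D i₀).1 + windowInd s e (D' i₀).1) * (L * w)) =
    2 * β * L * (windowInd s e (D i₀).1 + windowInd s e (D' i₀).1) by field_simp] at h

/-- Along each level of the tree the windows partition `[s, e)`, so the changed point enters
the cut probabilities of at most one node per level and per dataset. -/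
lemma transcriptProb_le (hℓ : IsLipschitzLoss ℓ L) (hD : IsDataset D) (hD' : IsDataset D')
    (hoff : ∀ j, j ≠ i₀ → D j = D' j) {β : ℝ} (hβ : 0 ≤ β) :
    ∀ (T : ℕ) (τ : Transcript m T) {s e : ℕ}, s ≤ e → ∀ {a w : ℝ}, 0 ≤ a → 0 < w → a + w ≤ 1 →
      transcriptProb ℓ D β T τ s e a w ≤
        exp (2 * β * L * T * (windowInd s e (D i₀).1 + windowInd s e (D' i₀).1)) *
          transcriptProb ℓ D' β T τ s e a w
  | 0, _, _, _, _, _, _, _, _, _ => by simp [transcriptProb]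
  | T + 1, (t, τl, τr), s, e, hse, a, w, ha, hw, hb => by
    have hroot := cutProb_le hℓ hD hD' hoff hβ T hse ha hw hb t
    have hl := transcriptProb_le hℓ hD hD' hoff hβ T τl (le_clip hse t) ha (w := w / 2)
      (by linarith) (by linarith)
    have hr := transcriptProb_le hℓ hD hD' hoff hβ T τr (clip_le s e t) (a := a + w / 2)
      (w := w / 2) (by linarith) (by linarith) (by linarith)
    have hq' := (expMech_pos (β / w) (cutScore ℓ D' T s e a w) t).le
    have hl' := transcriptProb_nonneg ℓ D' β T τl s (clip s e t) a (w / 2)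
    have exp_merge : ∀ {x y z u : ℝ}, u = x + y + z → ∀ p q r : ℝ,
        exp x * p * (exp y * q) * (exp z * r) = exp u * (p * q * r) := by
      intro x y z u h p q r
      rw [h, exp_add, exp_add]
      ring
    calc transcriptProb ℓ D β (T + 1) (t, τl, τr) s e a w
        ≤ _ * _ * _ := mul_le_mul (mul_le_mul hroot hl (transcriptProb_nonneg ..)
            (by unfold cutProb; positivity)) hr (transcriptProb_nonneg ..)
            (by unfold cutProb; positivity)
      _ = _ := by
        rw [transcriptProb, windowInd_split (le_clip hse t) (clip_le s e t) (D i₀).1,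
          windowInd_split (le_clip hse t) (clip_le s e t) (D' i₀).1]
        exact exp_merge (by push_cast; ring) _ _ _

end Privacy

section Utility

variable {m n : ℕ} {ℓ : ℝ → ℝ → ℝ} {L : ℝ} {D : Fin n → Fin m × ℝ}

/-- Cutting the window where the monotone comparator `g` crosses the midpoint `a + w/2` of
its value range splits it into two comparators for the two halves of the range. -/
lemma benchmark_le_windowCost (hℓ : IsLipschitzLoss ℓ L) (hD : IsDataset D) {g : ℕ → ℝ}
    (hg : Monotone g) :
    ∀ (T : ℕ) {s e : ℕ}, s ≤ e → e ≤ m → ∀ {a w : ℝ}, 0 ≤ a → 0 ≤ w → a + w ≤ 1 →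
      (∀ x ∈ Set.Ico s e, g x ∈ Set.Icc a (a + w)) →
      benchmark ℓ D T s e a w ≤ windowCost ℓ D g s e
  | 0, s, e, _, _, a, w, ha, _, hb, hgw => windowSum_mono D fun i hi =>
      bestLoss_le hℓ ha hb (hD i) (hgw _ hi)
  | T + 1, s, e, hse, hem, a, w, ha, hw, hb, hgw => by
    set S : Set ℕ := {x | s ≤ x ∧ (a + w / 2 < g x ∨ e ≤ x)}
    have heS : e ∈ S := ⟨hse, Or.inr le_rfl⟩
    obtain ⟨hsc, hcross⟩ : sInf S ∈ S := Nat.sInf_mem ⟨e, heS⟩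
    have hce : sInf S ≤ e := Nat.sInf_le heS
    set c := sInf S
    have hlow : ∀ x ∈ Set.Ico s c, g x ∈ Set.Icc a (a + w / 2) := fun x hx => by
      have hxS : x ∉ S := Nat.notMem_of_lt_sInf hx.2
      simp only [S, Set.mem_ofPred_eq, not_and, not_or, not_lt] at hxS
      exact ⟨(hgw x ⟨hx.1, by omega⟩).1, (hxS hx.1).1⟩
    have hhigh : ∀ x ∈ Set.Ico c e, g x ∈ Set.Icc (a + w / 2) (a + w / 2 + w / 2) := fun x hx => by
      have hgc : a + w / 2 < g c := hcross.resolve_right (not_le.2 (hx.1.trans_lt hx.2))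
      exact ⟨hgc.le.trans (hg hx.1), by linarith [(hgw x ⟨hsc.trans hx.1, hx.2⟩).2]⟩
    calc benchmark ℓ D (T + 1) s e a w
        ≤ cutScore ℓ D T s e a w ⟨c, by omega⟩ := inf'_le _ (mem_univ _)
      _ = benchmark ℓ D T s c a (w / 2) + benchmark ℓ D T c e (a + w / 2) (w / 2) := by
        rw [cutScore, clip_of_mem hsc hce]
      _ ≤ windowCost ℓ D g s c + windowCost ℓ D g c e := add_le_add
        (benchmark_le_windowCost hℓ hD hg T hsc (hce.trans hem) ha (by linarith) (by linarith) hlow)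
        (benchmark_le_windowCost hℓ hD hg T hce hem (by linarith) (by linarith) (by linarith) hhigh)
      _ = windowCost ℓ D g s e := (windowSum_split D hsc hce _).symm

lemma windowCost_decode_succ (ℓ : ℝ → ℝ → ℝ) (D : Fin n → Fin m × ℝ) {T : ℕ} (t : Fin (m + 1))
    (τl τr : Transcript m T) {s e : ℕ} (hse : s ≤ e) (a w : ℝ) :
    windowCost ℓ D (decode (T + 1) (t, τl, τr) s e a w) s e =
      windowCost ℓ D (decode T τl s (clip s e t) a (w / 2)) s (clip s e t) +
        windowCost ℓ D (decode T τr (clip s e t) e (a + w / 2) (w / 2)) (clip s e t) e := by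
  rw [windowCost, windowSum_split D (le_clip hse t) (clip_le s e t)]
  congr 1 <;> refine windowSum_congr D fun i hi => ?_ <;> simp only [decode]
  · rw [if_pos hi.2]
  · rw [if_neg (not_lt.2 hi.1)]

variable (ℓ D) in
def expectedCost (β : ℝ) (T s e : ℕ) (a w : ℝ) : ℝ :=
  ∑ τ : Transcript m T, transcriptProb ℓ D β T τ s e a w *
    windowCost ℓ D (decode T τ s e a w) s e

lemma sum_mul_sum_mul_add_of_sum_eq_one {α γ : Type*} [Fintype α] [Fintype γ] {p : α → ℝ}
    {r : γ → ℝ} (hp : ∑ i, p i = 1) (hr : ∑ j, r j = 1) (f : α → ℝ) (g : γ → ℝ) :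
    ∑ i, p i * ∑ j, r j * (f i + g j) = ∑ i, p i * f i + ∑ j, r j * g j := by
  simp_rw [mul_add, sum_add_distrib, ← sum_mul, hr, one_mul, mul_add, sum_add_distrib, ← sum_mul,
    hp, one_mul]

lemma expectedCost_succ (ℓ : ℝ → ℝ → ℝ) (D : Fin n → Fin m × ℝ) (β : ℝ) (T : ℕ) {s e : ℕ}
    (hse : s ≤ e) (a w : ℝ) :
    expectedCost ℓ D β (T + 1) s e a w = ∑ t, cutProb ℓ D β T s e a w t *
      (expectedCost ℓ D β T s (clip s e t) a (w / 2) +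
        expectedCost ℓ D β T (clip s e t) e (a + w / 2) (w / 2)) := by
  rw [expectedCost, Transcript.sum_succ]
  refine sum_congr rfl fun t _ => ?_
  simp only [transcriptProb, windowCost_decode_succ ℓ D t _ _ hse, mul_assoc, ← mul_sum]
  congr 1
  exact sum_mul_sum_mul_add_of_sum_eq_one (sum_transcriptProb ..) (sum_transcriptProb ..) _ _

/-- Each level of the tree loses at most `w log (m + 1) / β` to the exponential mechanism in
total, since the value ranges of its nodes have total width `w`; the leaves lose `L w / 2^T`
per data point for predicting the midpoints of their value ranges. -/
lemma expectedCost_le (hℓ : IsLipschitzLoss ℓ L) (hD : IsDataset D) {β : ℝ} (hβ : 0 < β) :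
    ∀ (T : ℕ) {s e : ℕ}, s ≤ e → ∀ {a w : ℝ}, 0 ≤ a → 0 < w → a + w ≤ 1 →
      expectedCost ℓ D β T s e a w ≤ benchmark ℓ D T s e a w +
        windowSum D s e (fun _ => L * w / 2 ^ T) + T * (w * log (m + 1) / β)
  | 0, s, e, _, a, w, ha, hw, hb => by
    have hmid : ∀ v ∈ Set.Icc a (a + w), |v - (a + w / 2)| ≤ w := fun v hv => by
      rw [abs_le]; constructor <;> linarith [hv.1, hv.2]
    simp only [expectedCost, Transcript.sum_zero, transcriptProb, decode, one_mul,
      pow_zero, div_one, CharP.cast_eq_zero, zero_mul, add_zero, benchmark, windowCost,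
      ← windowSum_add]
    refine windowSum_mono D fun i _ => ?_
    rw [Pi.add_apply]
    have := abs_bestLoss_sub_le hℓ ha hw.le hb (hD i) ⟨by linarith, by linarith⟩ hmid
    linarith [(abs_le.1 this).1]
  | T + 1, s, e, hse, a, w, ha, hw, hb => by
    have hchild : ∀ t : Fin (m + 1), expectedCost ℓ D β T s (clip s e t) a (w / 2) +
        expectedCost ℓ D β T (clip s e t) e (a + w / 2) (w / 2) ≤ cutScore ℓ D T s e a w t +
          (windowSum D s e (fun _ => L * w / 2 ^ (T + 1)) + T * (w * log (m + 1) / β)) := by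
      intro t
      have hl := expectedCost_le hℓ hD hβ T (le_clip hse t) ha (w := w / 2) (by linarith)
        (by linarith)
      have hr := expectedCost_le hℓ hD hβ T (clip_le s e t) (a := a + w / 2) (w := w / 2)
        (by linarith) (by linarith) (by linarith)
      have hsplit := windowSum_split D (le_clip hse t) (clip_le s e t)
        (fun _ => L * w / 2 ^ (T + 1))
      have hhalf : L * (w / 2) / 2 ^ T = L * w / 2 ^ (T + 1) := by ring
      have htwice : T * (w / 2 * log (m + 1) / β) + T * (w / 2 * log (m + 1) / β) =
          T * (w * log (m + 1) / β) := by ring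
      rw [hhalf] at hl hr
      rw [cutScore]
      linarith
    obtain ⟨t₀, -, ht₀⟩ := exists_mem_eq_inf' univ_nonempty (cutScore ℓ D T s e a w)
    have hmech := sum_expMech_mul_le (div_pos hβ hw) (cutScore ℓ D T s e a w) t₀
    rw [Fintype.card_fin] at hmech
    rw [expectedCost_succ ℓ D β T hse, benchmark_succ, ht₀]
    calc ∑ t, cutProb ℓ D β T s e a w t * (expectedCost ℓ D β T s (clip s e t) a (w / 2) +
          expectedCost ℓ D β T (clip s e t) e (a + w / 2) (w / 2))
        ≤ ∑ t, cutProb ℓ D β T s e a w t * (cutScore ℓ D T s e a w t +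
          (windowSum D s e (fun _ => L * w / 2 ^ (T + 1)) + T * (w * log (m + 1) / β))) :=
        sum_le_sum fun t _ => mul_le_mul_of_nonneg_left (hchild t) (expMech_pos _ _ _).le
      _ = ∑ t, cutProb ℓ D β T s e a w t * cutScore ℓ D T s e a w t +
          (windowSum D s e (fun _ => L * w / 2 ^ (T + 1)) + T * (w * log (m + 1) / β)) := by
        simp only [mul_add, sum_add_distrib, ← sum_mul, cutProb, sum_expMech, one_mul]
      _ ≤ _ := by
        have hlog : log ((m + 1 : ℕ) : ℝ) / (β / w) = w * log (m + 1) / β := by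
          push_cast; field_simp
        simp only [cutProb]
        push_cast
        linarith

end Utility

section Mechanism

variable {m n : ℕ}

def treeMechanism (ℓ : ℝ → ℝ → ℝ) (β : ℝ) (T : ℕ) (D : Fin n → Fin m × ℝ) :
    Measure (Fin m → ℝ) :=
  diracMixture (fun τ : Transcript m T => transcriptProb ℓ D β T τ 0 m 0 1)
    fun τ x => decode T τ 0 m 0 1 x

lemma isMonotone01_decode (T : ℕ) (τ : Transcript m T) :
    IsMonotone01 fun x : Fin m => decode T τ 0 m 0 1 x :=
  ⟨(decode_mono T τ 0 m zero_le_one).comp Fin.val_strictMono.monotone, fun x => by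
    simpa using decode_mem T τ 0 m (a := 0) zero_le_one x⟩

lemma isIsoRegAlg_treeMechanism (ℓ : ℝ → ℝ → ℝ) (β : ℝ) (T : ℕ) :
    IsIsoRegAlg (treeMechanism ℓ β T (m := m) (n := n)) := fun D _ =>
  have hp := fun τ => transcriptProb_nonneg ℓ D β T τ 0 m 0 1
  ⟨⟨diracMixture_eq_one hp (sum_transcriptProb ..) fun _ => Set.mem_univ _⟩,
    diracMixture_eq_one hp (sum_transcriptProb ..) (isMonotone01_decode T)⟩

lemma isDP_treeMechanism {ℓ : ℝ → ℝ → ℝ} {L β : ℝ} (hℓ : IsLipschitzLoss ℓ L) (hβ : 0 ≤ β)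
    (T : ℕ) : IsDP NeighborDS (treeMechanism ℓ β T (m := m) (n := n)) (4 * β * L * T) 0 := by
  rintro D D' ⟨hD, hD', i₀, hoff⟩ S -
  rw [ENNReal.ofReal_zero, add_zero]
  refine diracMixture_le_mul (exp_nonneg _) (fun τ => ?_) _ S
  refine (transcriptProb_le hℓ hD hD' hoff hβ T τ (Nat.zero_le m) le_rfl one_pos
    (by norm_num)).trans (mul_le_mul_of_nonneg_right (exp_le_exp.2 ?_) (transcriptProb_nonneg ..))
  have := mul_nonneg (mul_nonneg hβ hℓ.const_nonneg) (Nat.cast_nonneg T)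
  nlinarith [windowInd_le_one 0 m (D i₀).1, windowInd_le_one 0 m (D' i₀).1]

lemma benchmark_le_mul_empRisk {ℓ : ℝ → ℝ → ℝ} {L : ℝ} (hℓ : IsLipschitzLoss ℓ L)
    {D : Fin n → Fin m × ℝ} (hD : IsDataset D) (T : ℕ) {g : Fin m → ℝ} (hg : IsMonotone01 g) :
    benchmark ℓ D T 0 m 0 1 ≤ n * empRisk ℓ g D := by
  set g' : ℕ → ℝ := fun x => if h : x < m then g ⟨x, h⟩ else 1
  have hg'_mono : Monotone g' := fun x y hxy => by
    simp only [g']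
    split_ifs with hx hy hy
    · exact hg.1 (Fin.mk_le_mk.2 hxy)
    · exact (hg.2 _).2
    · omega
    · exact le_rfl
  have hg'_mem : ∀ x ∈ Set.Ico 0 m, g' x ∈ Set.Icc 0 (0 + 1) := fun x hx => by
    simpa [g', hx.2] using hg.2 ⟨x, hx.2⟩
  calc benchmark ℓ D T 0 m 0 1
      ≤ windowCost ℓ D g' 0 m := benchmark_le_windowCost hℓ hD hg'_mono T (Nat.zero_le m) le_rfl
        le_rfl zero_le_one (by norm_num) hg'_mem
    _ = n * empRisk ℓ g D := by
      simp only [windowCost, windowSum_univ, empRisk, g', Fin.is_lt, dite_true, ← mul_assoc]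
      obtain rfl | hn := n.eq_zero_or_pos
      · simp
      · rw [mul_one_div_cancel (by positivity), one_mul]

lemma integral_empRisk_treeMechanism (ℓ : ℝ → ℝ → ℝ) (β : ℝ) (T : ℕ) (D : Fin n → Fin m × ℝ) :
    ∫ f, empRisk ℓ f D ∂(treeMechanism ℓ β T D) = expectedCost ℓ D β T 0 m 0 1 / n := by
  simp only [treeMechanism,
    integral_diracMixture (fun τ => transcriptProb_nonneg ℓ D β T τ 0 m 0 1), expectedCost,
    windowCost, windowSum_univ, empRisk, sum_div]
  refine sum_congr rfl fun τ _ => ?_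
  ring

lemma integral_empRisk_treeMechanism_sub_optRisk_le {ℓ : ℝ → ℝ → ℝ} {L β : ℝ}
    (hℓ : IsLipschitzLoss ℓ L) (hβ : 0 < β) (T : ℕ) (hn : 0 < n) {D : Fin n → Fin m × ℝ}
    (hD : IsDataset D) :
    ∫ f, empRisk ℓ f D ∂(treeMechanism ℓ β T D) - optRisk ℓ D ≤
      L / 2 ^ T + T * log (m + 1) / (β * n) := by
  have hn' : (0 : ℝ) < n := Nat.cast_pos.2 hn
  have hcost := expectedCost_le hℓ hD hβ T (Nat.zero_le m) le_rfl one_pos (by norm_num)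
  have hopt : benchmark ℓ D T 0 m 0 1 / n ≤ optRisk ℓ D :=
    le_ciInf fun g => (div_le_iff₀' hn').2 (benchmark_le_mul_empRisk hℓ hD T g.2)
  rw [windowSum_univ, sum_const, card_univ, Fintype.card_fin, nsmul_eq_mul] at hcost
  have hsplit : (benchmark ℓ D T 0 m 0 1 + n * (L * 1 / 2 ^ T) + T * (1 * log (m + 1) / β)) / n =
      benchmark ℓ D T 0 m 0 1 / n + (L / 2 ^ T + T * log (m + 1) / (β * n)) := by
    field_simp
    ring
  rw [integral_empRisk_treeMechanism]
  linarith [div_le_div_of_nonneg_right hcost hn'.le]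

end Mechanism

section Depth

/-- Large enough that the leaf error `2⁻ᵀ` is below `1 / x`. -/
def treeDepth (x : ℝ) : ℕ := max 1 ⌈logb 2 x⌉₊

lemma le_two_pow_treeDepth {x : ℝ} (hx : 0 < x) : x ≤ 2 ^ treeDepth x :=
  calc x = 2 ^ logb 2 x := (rpow_logb two_pos (by norm_num) hx).symm
    _ ≤ 2 ^ (⌈logb 2 x⌉₊ : ℝ) := rpow_le_rpow_of_exponent_le one_le_two (Nat.le_ceil _)
    _ ≤ 2 ^ treeDepth x := by
      rw [rpow_natCast]; exact pow_le_pow_right₀ one_le_two (le_max_right _ _)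

lemma treeDepth_sq_le (x : ℝ) : (treeDepth x : ℝ) ^ 2 ≤ 5 * (1 + log x ^ 2) := by
  have hceil : (⌈logb 2 x⌉₊ : ℝ) ≤ 1 + |logb 2 x| := by
    rcases le_or_gt (logb 2 x) 0 with h | h
    · simp [Nat.ceil_eq_zero.2 h]; positivity
    · linarith [Nat.ceil_lt_add_one h.le, le_abs_self (logb 2 x)]
  have hT : (treeDepth x : ℝ) ≤ 1 + |logb 2 x| := by
    rw [treeDepth, Nat.cast_max, Nat.cast_one]
    exact max_le (by linarith [abs_nonneg (logb 2 x)]) hceil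
  have hlog2 : 0.4 ≤ log 2 ^ 2 := by nlinarith [log_two_gt_d9]
  have hlogb : logb 2 x * log 2 = log x := div_mul_cancel₀ _ (log_pos one_lt_two).ne'
  have hsq : (treeDepth x : ℝ) ^ 2 ≤ 2 + 2 * logb 2 x ^ 2 :=
    (pow_le_pow_left₀ (Nat.cast_nonneg _) hT 2).trans
      (by nlinarith [sq_nonneg (1 - |logb 2 x|), sq_abs (logb 2 x)])
  have hlog : 0.4 * logb 2 x ^ 2 ≤ log x ^ 2 := by
    rw [← hlogb, mul_pow]; nlinarith [sq_nonneg (logb 2 x)]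
  linarith

lemma treeError_le {m : ℕ} (hm : 2 ≤ m) {L x : ℝ} (hL : 0 ≤ L) (hx : 0 < x) :
    L / 2 ^ treeDepth x + 4 * L * treeDepth x ^ 2 * log (m + 1) / x ≤
      42 * L * log m * (1 + log x ^ 2) / x := by
  have hm' : (2 : ℝ) ≤ m := by exact_mod_cast hm
  have hlogm : 1 ≤ 2 * log m := by
    linarith [log_two_gt_d9, log_le_log two_pos hm']
  have hlogm1 : log (m + 1) ≤ 2 * log m := by
    rw [← log_rpow (by linarith), rpow_two]
    exact log_le_log (by linarith) (by nlinarith)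
  have hQ : 1 ≤ 1 + log x ^ 2 := le_add_of_nonneg_right (sq_nonneg _)
  have hleaf : L / 2 ^ treeDepth x ≤ L / x :=
    div_le_div_of_nonneg_left hL hx (le_two_pow_treeDepth hx)
  have hnodes : treeDepth x ^ 2 * log (m + 1) ≤ 5 * (1 + log x ^ 2) * (2 * log m) :=
    mul_le_mul (treeDepth_sq_le x) hlogm1 (log_nonneg (by linarith)) (by positivity)
  have hone : 1 ≤ 2 * log m * (1 + log x ^ 2) := by nlinarith
  calc L / 2 ^ treeDepth x + 4 * L * treeDepth x ^ 2 * log (m + 1) / x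
      ≤ (L * 1 + 4 * L * (treeDepth x ^ 2 * log (m + 1))) / x := by
        rw [mul_one, add_div, ← mul_assoc]
        exact add_le_add_left hleaf _
    _ ≤ (L * (2 * log m * (1 + log x ^ 2)) +
          4 * L * (5 * (1 + log x ^ 2) * (2 * log m))) / x := by gcongr
    _ = 42 * L * log m * (1 + log x ^ 2) / x := by ring

end Depth

section ConstantMechanism

variable {X : Type*} [PartialOrder X] {n : ℕ}

lemma isDP_const {I Ω : Type*} [MeasurableSpace Ω] (Neighbor : I → I → Prop) (μ : Measure Ω)
    {ε : ℝ} (hε : 0 ≤ ε) (δ : ℝ) : IsDP Neighbor (fun _ => μ) ε δ := fun _ _ _ S _ =>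
  calc μ S ≤ ENNReal.ofReal (exp ε) * μ S :=
        le_mul_of_one_le_left (zero_le) (by simpa using one_le_exp hε)
    _ ≤ _ := le_self_add

lemma isIsoRegAlg_dirac {f : X → ℝ} (hf : IsMonotone01 f) :
    IsIsoRegAlg fun _ : Fin n → X × ℝ => Measure.dirac f :=
  fun _ _ => ⟨inferInstance, Measure.dirac_apply_of_mem hf⟩

lemma empRisk_le_optRisk_of_lipschitz_zero {ℓ : ℝ → ℝ → ℝ} (hℓ : IsLipschitzLoss ℓ 0)
    {D : Fin n → X × ℝ} (hD : IsDataset D) {f : X → ℝ} (hf : ∀ x, f x ∈ Set.Icc (0 : ℝ) 1) :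
    empRisk ℓ f D ≤ optRisk ℓ D := by
  refine le_ciInf fun g => mul_le_mul_of_nonneg_left (sum_le_sum fun i _ => ?_) (by positivity)
  have := hℓ.2 (f (D i).1) (g.1 (D i).1) (D i).2 (hf _) (g.2.2 _) (hD i)
  rw [zero_mul, abs_nonpos_iff, sub_eq_zero] at this
  exact this.le

end ConstantMechanism

end IsotonicDP

open IsotonicDP

/-- **Theorem 3 (Upper Bound for Totally Ordered Sets).** There is a universal constant
`C > 0` such that for `X = {1,…,m}` (here `Fin m`) with `m ≥ 2`, every `L`-Lipschitz
loss `ℓ`, every `n ≥ 1` and `ε ∈ (0,1]`, there is an `ε`-DP isotonic-regression mechanism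
with expected excess empirical risk at most `C · L · log m · (1 + log²(εn)) / (εn)`. -/
theorem dp_isotonic_regression_total_order_upper_bound :
    ∃ C : ℝ, 0 < C ∧
      ∀ m : ℕ, 2 ≤ m →
        ∀ (ℓ : ℝ → ℝ → ℝ) (L : ℝ), IsLipschitzLoss ℓ L →
        ∀ n : ℕ, 1 ≤ n →
        ∀ ε : ℝ, ε ∈ Set.Ioc (0 : ℝ) 1 →
        ∃ M : (Fin n → Fin m × ℝ) → Measure (Fin m → ℝ),
          IsIsoRegAlg M ∧
          IsDP NeighborDS M ε 0 ∧
          ∀ D : Fin n → Fin m × ℝ, IsDataset D →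
            (∫ f, empRisk ℓ f D ∂(M D)) - optRisk ℓ D ≤
              C * L * Real.log m * (1 + Real.log (ε * n) ^ 2) / (ε * n) := by
  refine ⟨42, by norm_num, fun m hm ℓ L hℓ n hn ε hε => ?_⟩
  have hεn : 0 < ε * n := mul_pos hε.1 (Nat.cast_pos.2 hn)
  rcases hℓ.const_nonneg.eq_or_lt with rfl | hL
  · have hhalf : IsMonotone01 fun _ : Fin m => (1 / 2 : ℝ) :=
      ⟨monotone_const, fun _ => by norm_num⟩
    refine ⟨_, isIsoRegAlg_dirac hhalf, isDP_const _ _ hε.1.le 0, fun D hD => ?_⟩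
    rw [integral_dirac, mul_zero, zero_mul, zero_mul, zero_div, sub_nonpos]
    exact empRisk_le_optRisk_of_lipschitz_zero hℓ hD hhalf.2
  · set T := treeDepth (ε * n)
    have hT : (0 : ℝ) < T := Nat.cast_pos.2 (le_max_left 1 _)
    have hβ : 0 < ε / (4 * L * T) := by have := hε.1; positivity
    refine ⟨treeMechanism ℓ (ε / (4 * L * T)) T, isIsoRegAlg_treeMechanism _ _ _, ?_,
      fun D hD => ?_⟩
    · convert isDP_treeMechanism hℓ hβ.le T using 1
      field_simp
    · calc _ ≤ L / 2 ^ T + T * Real.log (m + 1) / (ε / (4 * L * T) * n) :=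
            integral_empRisk_treeMechanism_sub_optRisk_le hℓ hβ T hn hD
        _ = L / 2 ^ T + 4 * L * T ^ 2 * Real.log (m + 1) / (ε * n) := by
            field_simp
        _ ≤ _ := treeError_le hm hL.le hεn
end
end

section
/- Let D ≥ 2 and m ≥ 1 be integers. Consider the input domain [D]^m = {1,...,D}^m, where two vectors z, z' ∈ [D]^m are neighbors if and only if they differ in at most one coordinate. Then for every randomized algorithm M mapping [D]^m to probability distributions over [D]^m that is (ln(D/2), 0.25)-differentially private with respect to this neighboring relation, the average over a uniformly random input z ∈ [D]^m of the expected Hamming distance E_{z'∼M(z)}[‖M(z) − z‖_0] (the number of coordinates where the output differs from z) is at least 0.25·m. -/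
open MeasureTheory

noncomputable section

/-! Fix a coordinate `i` and an input `z`. The inputs `update z i v`, `v : β`, are all neighbours
of `z`, so the probability that `M (update z i v)` reproduces its own `i`-th letter `v` is at most
`exp ε · P_{M z}[z' i = v] + δ`; summing over `v` bounds the total by `exp ε + |β| δ`. Averaged over
inputs, the `i`-th letter is thus recovered with probability at most `(exp ε + |β| δ) / |β|`, which
is `3/4` for `exp ε = |β| / 2` and `δ = 1/4`, so each of the `m` coordinates contributes at least
`1/4` to the expected Hamming distance. -/

open Function

theorem Fintype.sum_sum_update {ι β R : Type*} [Fintype ι] [DecidableEq ι] [Fintype β]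
    [AddCommMonoid R] (f : (ι → β) → R) (i : ι) :
    ∑ z : ι → β, ∑ v : β, f (update z i v) = Fintype.card β • ∑ z, f z := by
  have hinv : Involutive fun p : (ι → β) × β => (update p.1 i p.2, p.1 i) := by
    intro p; simp
  rw [← Fintype.sum_prod_type', ← Equiv.sum_comp (hinv.toPerm _)]
  simp [Fintype.sum_prod_type, Finset.smul_sum]

theorem hammingDist_update_le_one {ι β : Type*} [Fintype ι] [DecidableEq ι] [DecidableEq β]
    (z : ι → β) (i : ι) (v : β) : hammingDist (update z i v) z ≤ 1 :=
  calc hammingDist (update z i v) z ≤ ({i} : Finset ι).card := by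
        refine Finset.card_le_card fun j hj => ?_
        by_contra hji
        simp_all [update_of_ne (Finset.notMem_singleton.mp hji)]
    _ = 1 := Finset.card_singleton i

theorem IsDP.measureReal_le {I Ω : Type*} [MeasurableSpace Ω] {N : I → I → Prop}
    {M : I → Measure Ω} [∀ x, IsFiniteMeasure (M x)] {ε δ : ℝ} (hdp : IsDP N M ε δ)
    (hδ : 0 ≤ δ) {x y : I} (hxy : N x y) {S : Set Ω} (hS : MeasurableSet S) :
    (M x).real S ≤ Real.exp ε * (M y).real S + δ := by
  have h := ENNReal.toReal_mono (by finiteness) (hdp x y hxy S hS)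
  rwa [ENNReal.toReal_add (by finiteness) (by finiteness), ENNReal.toReal_mul,
    ENNReal.toReal_ofReal (Real.exp_nonneg ε), ENNReal.toReal_ofReal hδ] at h

section Coordinates

variable {ι β : Type*} [MeasurableSpace β] [MeasurableSingletonClass β]

theorem measurableSet_apply_eq (i : ι) (v : β) : MeasurableSet {z : ι → β | z i = v} :=
  (measurableSet_singleton v).preimage (measurable_pi_apply i)

theorem sum_measureReal_apply_eq [Fintype β] (μ : Measure (ι → β)) [IsProbabilityMeasure μ]
    (i : ι) : ∑ v : β, μ.real {z | z i = v} = 1 := by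
  refine (sum_measureReal_preimage_singleton (f := fun z : ι → β => z i) Finset.univ
    fun v _ => measurableSet_apply_eq i v).trans ?_
  simp

variable [Fintype ι] [DecidableEq β]

theorem integral_hammingDist (μ : Measure (ι → β)) [IsFiniteMeasure μ] (z : ι → β) :
    ∫ z', (hammingDist z z' : ℝ) ∂μ = ∑ i, μ.real {z' | z' i ≠ z i} := by
  have hS : ∀ i, MeasurableSet {z' : ι → β | z' i ≠ z i} :=
    fun i => (measurableSet_apply_eq i (z i)).compl
  have hsum : (fun z' => (hammingDist z z' : ℝ)) =
      fun z' => ∑ i, {z' : ι → β | z' i ≠ z i}.indicator 1 z' := by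
    ext z'
    simp [hammingDist, Finset.card_filter, Set.indicator_apply, ne_comm]
  rw [hsum, integral_finsetSum _ fun i _ => (integrable_const 1).indicator (hS i)]
  exact Finset.sum_congr rfl fun i _ => integral_indicator_one (hS i)

variable [DecidableEq ι] [Fintype β] {M : (ι → β) → Measure (ι → β)}
  [∀ z, IsProbabilityMeasure (M z)] {ε δ : ℝ}

theorem IsDP.card_mul_sum_measureReal_apply_eq_le
    (hdp : IsDP (fun z z' : ι → β => hammingDist z z' ≤ 1) M ε δ) (hδ : 0 ≤ δ) (i : ι) :
    Fintype.card β * ∑ z, (M z).real {z' | z' i = z i} ≤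
      Fintype.card (ι → β) * (Real.exp ε + Fintype.card β * δ) := by
  have hfiber : ∀ z : ι → β, ∑ v, (M (update z i v)).real {z' | z' i = v} ≤
      Real.exp ε + Fintype.card β * δ := by
    intro z
    calc ∑ v, (M (update z i v)).real {z' | z' i = v}
        ≤ ∑ v, (Real.exp ε * (M z).real {z' | z' i = v} + δ) :=
          Finset.sum_le_sum fun v _ =>
            hdp.measureReal_le hδ (hammingDist_update_le_one z i v) (measurableSet_apply_eq i v)
      _ = Real.exp ε + Fintype.card β * δ := by
          rw [Finset.sum_add_distrib, ← Finset.mul_sum, sum_measureReal_apply_eq]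
          simp
  have hreindex := Fintype.sum_sum_update (fun z => (M z).real {z' | z' i = z i}) i
  simp only [update_self, nsmul_eq_mul] at hreindex
  rw [← hreindex]
  calc _ ≤ ∑ _z : ι → β, (Real.exp ε + Fintype.card β * δ) :=
        Finset.sum_le_sum fun z _ => hfiber z
    _ = _ := by rw [Finset.sum_const, Finset.card_univ, nsmul_eq_mul]

theorem IsDP.card_mul_sum_integral_hammingDist_ge
    (hdp : IsDP (fun z z' : ι → β => hammingDist z z' ≤ 1) M ε δ) (hδ : 0 ≤ δ) :
    Fintype.card ι * Fintype.card (ι → β) *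
        (Fintype.card β - Real.exp ε - Fintype.card β * δ) ≤
      Fintype.card β * ∑ z, ∫ z', (hammingDist z z' : ℝ) ∂(M z) := by
  have hmiss : ∀ z i, (M z).real {z' | z' i ≠ z i} = 1 - (M z).real {z' | z' i = z i} :=
    fun z i => probReal_compl_eq_one_sub (measurableSet_apply_eq i (z i))
  have hcoord : ∀ i, Fintype.card (ι → β) * (Fintype.card β - Real.exp ε - Fintype.card β * δ) ≤
      Fintype.card β * ∑ z, (1 - (M z).real {z' | z' i = z i}) := by
    intro i
    have := hdp.card_mul_sum_measureReal_apply_eq_le hδ i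
    rw [Finset.sum_sub_distrib, Finset.sum_const, Finset.card_univ, nsmul_one]
    linarith
  simp only [integral_hammingDist, hmiss]
  rw [Finset.sum_comm, Finset.mul_sum, mul_assoc, ← nsmul_eq_mul, ← Finset.card_univ,
    ← Finset.sum_const]
  exact Finset.sum_le_sum fun i _ => hcoord i

end Coordinates

theorem dp_vector_privatization_large_alphabet_lower_bound_general
    (D m : ℕ) (hD : 2 ≤ D)
    (M : (Fin m → Fin D) → Measure (Fin m → Fin D))
    (hprob : ∀ z, IsProbabilityMeasure (M z))
    (hdp : IsDP (fun z z' : Fin m → Fin D => hammingDist z z' ≤ 1) M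
      (Real.log ((D : ℝ) / 2)) 0.25) :
    0.25 * m ≤
      (1 / (D : ℝ) ^ m) *
        ∑ z : Fin m → Fin D, ∫ z', (hammingDist z z' : ℝ) ∂(M z) := by
  have hD₀ : (0 : ℝ) < D := by exact_mod_cast zero_lt_two.trans_le hD
  have h := hdp.card_mul_sum_integral_hammingDist_ge (by norm_num)
  simp only [Fintype.card_fin, Fintype.card_pi, Finset.prod_const, Finset.card_univ,
    Nat.cast_pow] at h
  rw [Real.exp_log (by positivity)] at h
  rw [one_div, le_inv_mul_iff₀ (by positivity)]
  refine le_of_mul_le_mul_left ?_ hD₀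
  linear_combination h

/-- **Lemma (Privatizing vectors over a large alphabet).** For integers `D ≥ 2`, `m ≥ 1`,
any `(ln(D/2), 0.25)`-DP mechanism `M : [D]^m → [D]^m` (w.r.t. the Hamming-distance-one
neighboring relation) satisfies
`𝔼_{z ∼ Uniform([D]^m)} 𝔼_{z' ∼ M(z)} [‖z' − z‖₀] ≥ 0.25·m`. -/
theorem dp_vector_privatization_large_alphabet_lower_bound
    (D m : ℕ) (hD : 2 ≤ D) (hm : 1 ≤ m)
    (M : (Fin m → Fin D) → Measure (Fin m → Fin D))
    (hprob : ∀ z, IsProbabilityMeasure (M z))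
    (hdp : IsDP (fun z z' : Fin m → Fin D => hammingDist z z' ≤ 1) M
      (Real.log ((D : ℝ) / 2)) 0.25) :
    0.25 * m ≤
      (1 / (D : ℝ) ^ m) *
        ∑ z : Fin m → Fin D, ∫ z', (hammingDist z z' : ℝ) ∂(M z) :=
  dp_vector_privatization_large_alphabet_lower_bound_general D m hD M hprob hdp
end
end

section
/- Let X be a finite partially ordered set of width w, and let T ≥ 1 be an integer. Then the number of monotone functions from X to the chain T = {0, 1/T, 2/T, ..., 1} (a totally ordered set of T+1 elements) is at most (|X| + T)^{w·T}. -/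
open MeasureTheory

noncomputable section

/-!
A monotone `f : X → Fin (T + 1)` is determined by its `T` upper level sets `{x | t + 1 ≤ f x}`,
and each of these upper sets is determined by its minimal elements. These form an antichain, so
there are at most `w` of them, and a set of at most `w` points of `X` can be recorded as a
`w`-tuple in `Option X`. Hence there are at most `((|X| + 1) ^ w) ^ T ≤ (|X| + T) ^ (w T)`
monotone functions.
-/

open Finset

theorem IsAntichain.card_le_posetWidth {X : Type*} [PartialOrder X] [Finite X] {A : Finset X}
    (hA : IsAntichain (· ≤ ·) (A : Set X)) : #A ≤ posetWidth X := by
  have := Fintype.ofFinite X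
  exact le_csSup ⟨Fintype.card X, fun _ ⟨B, _, hB⟩ => hB ▸ card_le_univ B⟩ ⟨A, hA, rfl⟩

theorem card_finset_card_le_le_pow (α : Type*) [Fintype α] (w : ℕ) :
    Nat.card {s : Finset α // #s ≤ w} ≤ (Fintype.card α + 1) ^ w := by
  have hinj : Function.Injective
      fun (s : {s : Finset α // #s ≤ w}) (i : Fin w) => s.1.toList[i.1]? := by
    rintro ⟨s, hs⟩ ⟨t, ht⟩ hst
    have hlist : s.toList = t.toList := List.ext_getElem? fun i => by
      by_cases hi : i < w
      · exact congrFun hst ⟨i, hi⟩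
      · rw [List.getElem?_eq_none, List.getElem?_eq_none] <;> rw [length_toList] <;> omega
    exact Subtype.ext <| by ext x; rw [← mem_toList, hlist, mem_toList]
  calc Nat.card {s : Finset α // #s ≤ w}
      ≤ Nat.card (Fin w → Option α) := Nat.card_le_card_of_injective _ hinj
    _ = (Fintype.card α + 1) ^ w := by
      simp

theorem eq_of_forall_succ_le_iff {X : Type*} {n : ℕ} {f g : X → Fin (n + 1)}
    (h : ∀ (t : Fin n) (x : X), t.succ ≤ f x ↔ t.succ ≤ g x) : f = g := by
  have key : ∀ {f g : X → Fin (n + 1)},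
      (∀ (t : Fin n) x, t.succ ≤ f x → t.succ ≤ g x) → f ≤ g := by
    intro f g hfg x
    rcases (f x).eq_zero_or_eq_succ with hx | ⟨t, hx⟩
    · exact hx ▸ Fin.zero_le _
    · exact hx ▸ hfg t x hx.ge
  exact le_antisymm (key fun t x => (h t x).1) (key fun t x => (h t x).2)

theorem Monotone.le_apply_iff_exists_minimal_le {X α : Type*} [Preorder X] [Finite X]
    [Preorder α] {f : X → α} (hf : Monotone f) {c : α} {x : X} :
    c ≤ f x ↔ ∃ m, Minimal (fun y => c ≤ f y) m ∧ m ≤ x :=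
  ⟨fun h => (exists_minimal_le_of_wellFoundedLT _ x h).imp fun _ hm => ⟨hm.2, hm.1⟩,
    fun ⟨_, hm, hmx⟩ => hm.prop.trans (hf hmx)⟩

section levelMinimals

variable {X α : Type*} [Finite X]

def levelMinimals [Preorder X] [LE α] (f : X → α) (c : α) : Finset X :=
  (Set.toFinite {x | Minimal (fun y => c ≤ f y) x}).toFinset

theorem card_levelMinimals_le_posetWidth [PartialOrder X] [LE α] (f : X → α) (c : α) :
    #(levelMinimals f c) ≤ posetWidth X :=
  IsAntichain.card_le_posetWidth <| by
    rw [levelMinimals, Set.Finite.coe_toFinset]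
    exact setOfPred_minimal_antichain _

theorem Monotone.le_apply_iff_exists_mem_levelMinimals_le [Preorder X] [Preorder α]
    {f : X → α} (hf : Monotone f) {c : α} {x : X} :
    c ≤ f x ↔ ∃ m ∈ levelMinimals f c, m ≤ x := by
  simp only [levelMinimals, Set.Finite.mem_toFinset, Set.mem_ofPred_eq]
  exact hf.le_apply_iff_exists_minimal_le

theorem eq_of_levelMinimals_succ_eq [Preorder X] {n : ℕ} {f g : X → Fin (n + 1)}
    (hf : Monotone f) (hg : Monotone g)
    (h : ∀ t : Fin n, levelMinimals f t.succ = levelMinimals g t.succ) : f = g :=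
  eq_of_forall_succ_le_iff fun t _ => by
    rw [hf.le_apply_iff_exists_mem_levelMinimals_le, hg.le_apply_iff_exists_mem_levelMinimals_le,
      h t]

end levelMinimals

/-- **Counting monotone functions into a chain.** For a finite poset `X` of width `w` and
an integer `T ≥ 1`, the number of monotone functions from `X` into a chain of `T + 1`
elements (here `Fin (T+1)`, representing `{0, 1/T, …, 1}`) is at most `(|X| + T)^(w·T)`. -/
theorem count_monotone_functions_into_chain
    (X : Type) [PartialOrder X] [Fintype X] (w T : ℕ)
    (hw : posetWidth X = w) (hT : 1 ≤ T) :
    Nat.card {f : X → Fin (T + 1) // Monotone f} ≤ (Fintype.card X + T) ^ (w * T) := by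
  subst hw
  let code : {f : X → Fin (T + 1) // Monotone f} → Fin T → {s : Finset X // #s ≤ posetWidth X} :=
    fun f t => ⟨levelMinimals f.1 t.succ, card_levelMinimals_le_posetWidth _ _⟩
  have hcode : Function.Injective code := fun f g hfg =>
    Subtype.ext <| eq_of_levelMinimals_succ_eq f.2 g.2 fun t =>
      congrArg Subtype.val (congrFun hfg t)
  calc Nat.card {f : X → Fin (T + 1) // Monotone f}
      ≤ Nat.card (Fin T → {s : Finset X // #s ≤ posetWidth X}) :=
        Nat.card_le_card_of_injective code hcode
    _ = Nat.card {s : Finset X // #s ≤ posetWidth X} ^ T := by rw [Nat.card_fun, Nat.card_fin]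
    _ ≤ ((Fintype.card X + 1) ^ posetWidth X) ^ T :=
      Nat.pow_le_pow_left (card_finset_card_le_le_pow X _) T
    _ ≤ (Fintype.card X + T) ^ (posetWidth X * T) := by
      rw [← pow_mul]
      exact Nat.pow_le_pow_left (by omega) _
end
end
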